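/- arXiv:1209.0185 — 5 statements merged into one kernel-verified Lean document; each statement's English description precedes it below -/
import Mathlib

section
/- Normalized generalized two-filter decomposition: for every integer t with 2 ≤ t ≤ T, if 0 < ∫_E γ_{t−1} dλ < ∞ and 0 < ∫_E γ̃_t dλ < ∞, then, writing π_{t−1}(x) := γ_{t−1}(x) / ∫_E γ_{t−1} dλ and π̃_t(x′) := γ̃_t(x′) / ∫_E γ̃_t dλ, one has p(y_{1:T}) = (∫_E γ_{t−1} dλ) · (∫_E γ̃_t dλ) · ∫_E ∫_E π_{t−1}(x) π̃_t(x′) f_t(x, x′) / ξ_t(x′) λ(dx) λ(dx′). -/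
open MeasureTheory ENNReal

/-- The joint density of a hidden Markov model path `x : Fin k → E`
(representing `x_1, …, x_k`, with initial point `x0`):
`∏_{n=1}^k g_n(x_n) f_n(x_{n-1}, x_n)`. -/
noncomputable def hmmDens {E : Type*} [MeasurableSpace E]
    (f : ℕ → E → E → ℝ≥0∞) (g : ℕ → E → ℝ≥0∞) (x0 : E)
    (k : ℕ) (x : Fin k → E) : ℝ≥0∞ :=
  ∏ i : Fin k,
    g ((i : ℕ) + 1) (x i) *
      f ((i : ℕ) + 1)
        (if _h : (i : ℕ) = 0 then x0
          else x ⟨(i : ℕ) - 1, Nat.lt_of_le_of_lt (Nat.sub_le _ _) i.isLt⟩)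
        (x i)

/-- The marginal likelihood `p(y_{1:T})`. -/
noncomputable def marginalLik {E : Type*} [MeasurableSpace E] (lam : Measure E)
    (f : ℕ → E → E → ℝ≥0∞) (g : ℕ → E → ℝ≥0∞) (x0 : E) (T : ℕ) : ℝ≥0∞ :=
  ∫⁻ x : Fin T → E, hmmDens f g x0 T x ∂(Measure.pi fun _ => lam)

/-- The forward unnormalized filter density `γ_n(x)`. -/
noncomputable def gammaFwd {E : Type*} [MeasurableSpace E] (lam : Measure E)
    (f : ℕ → E → E → ℝ≥0∞) (g : ℕ → E → ℝ≥0∞) (x0 : E) (n : ℕ) (x : E) : ℝ≥0∞ :=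
  ∫⁻ u : Fin (n - 1) → E,
    hmmDens f g x0 (n - 1) u *
      (g n x *
        f n
          (if h : n - 1 = 0 then x0
            else u ⟨n - 1 - 1, Nat.sub_lt (Nat.pos_of_ne_zero h) one_pos⟩)
          x) ∂(Measure.pi fun _ => lam)

/-- The density of the backward path segment `x_{n+1}, …, x_T` (as `v : Fin (T-n) → E`)
given `x_n = x`:  `∏_{p=n+1}^T g_p(x_p) f_p(x_{p-1}, x_p)`. -/
noncomputable def hmmBwdDens {E : Type*} [MeasurableSpace E]
    (f : ℕ → E → E → ℝ≥0∞) (g : ℕ → E → ℝ≥0∞)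
    (T n : ℕ) (x : E) (v : Fin (T - n) → E) : ℝ≥0∞ :=
  ∏ i : Fin (T - n),
    g (n + 1 + (i : ℕ)) (v i) *
      f (n + 1 + (i : ℕ))
        (if _h : (i : ℕ) = 0 then x
          else v ⟨(i : ℕ) - 1, Nat.lt_of_le_of_lt (Nat.sub_le _ _) i.isLt⟩)
        (v i)

/-- The backward unnormalized density `γ̃_n(x)`. -/
noncomputable def gammaBwd {E : Type*} [MeasurableSpace E] (lam : Measure E)
    (f : ℕ → E → E → ℝ≥0∞) (g : ℕ → E → ℝ≥0∞) (ξ : ℕ → E → ℝ≥0∞)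
    (T n : ℕ) (x : E) : ℝ≥0∞ :=
  ξ n x * g n x *
    ∫⁻ v : Fin (T - n) → E, hmmBwdDens f g T n x v ∂(Measure.pi fun _ => lam)

set_option linter.unusedSectionVars false
set_option maxHeartbeats 1000000

section AUX

variable {E : Type*} [MeasurableSpace E] (lam : Measure E) [SigmaFinite lam]

lemma fin_append_apply {m k : ℕ} (u : Fin m → E) (v : Fin k → E) (i : Fin (m + k)) :
    Fin.append u v i =
      if h : (i : ℕ) < m then u ⟨i, h⟩ else v ⟨(i : ℕ) - m, by omega⟩ := by
  by_cases h : (i : ℕ) < m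
  · rw [dif_pos h]; exact Fin.append_left u v ⟨(i : ℕ), h⟩
  · rw [dif_neg h, ← Fin.append_right u v ⟨(i : ℕ) - m, by omega⟩]
    congr 1
    exact Fin.ext (by simp; omega)

lemma measurable_fin_append {m k : ℕ} (u : Fin m → E) :
    Measurable fun v : Fin k → E => Fin.append u v := by
  refine measurable_pi_lambda _ fun i => ?_
  simp only [fin_append_apply]
  split_ifs with h
  · exact measurable_const
  · exact measurable_pi_apply _

lemma measurable_append_pair {m k : ℕ} :
    Measurable fun p : (Fin m → E) × (Fin k → E) => Fin.append p.1 p.2 := by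
  refine measurable_pi_lambda _ fun i => ?_
  simp only [fin_append_apply]
  split_ifs with h
  · exact (measurable_pi_apply _).comp measurable_fst
  · exact (measurable_pi_apply _).comp measurable_snd

lemma lintegral_pi_split (m k : ℕ) (F : (Fin (m + k) → E) → ℝ≥0∞) (hF : Measurable F) :
    ∫⁻ w, F w ∂(Measure.pi fun _ : Fin (m + k) => lam) =
      ∫⁻ u : Fin m → E, ∫⁻ v : Fin k → E, F (Fin.append u v)
        ∂(Measure.pi fun _ : Fin k => lam) ∂(Measure.pi fun _ : Fin m => lam) := by
  have h1 := measurePreserving_piCongrLeft (fun _ : Fin (m + k) => lam) finSumFinEquiv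
  rw [← h1.lintegral_comp hF]
  have h2 := measurePreserving_sumPiEquivProdPi_symm (fun _ : Fin m ⊕ Fin k => lam)
  rw [← h2.lintegral_comp
    (show Measurable fun s : Fin m ⊕ Fin k → E =>
        F ((MeasurableEquiv.piCongrLeft (fun _ => E) finSumFinEquiv) s) from
      hF.comp (MeasurableEquiv.piCongrLeft (fun _ => E) finSumFinEquiv).measurable)]
  rw [lintegral_prod _ (show AEMeasurable (fun p : (Fin m → E) × (Fin k → E) =>
      F ((MeasurableEquiv.piCongrLeft (fun _ => E) finSumFinEquiv)
        ((MeasurableEquiv.sumPiEquivProdPi fun _ => E).symm p)))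
      ((Measure.pi fun _ : Fin m => lam).prod (Measure.pi fun _ : Fin k => lam)) from
    (hF.comp ((MeasurableEquiv.piCongrLeft (fun _ => E) finSumFinEquiv).measurable.comp
      (MeasurableEquiv.sumPiEquivProdPi _).symm.measurable)).aemeasurable)]
  refine lintegral_congr fun u => lintegral_congr fun v => ?_
  congr 1
  funext i
  obtain ⟨j, rfl⟩ := finSumFinEquiv.surjective i
  simp only [MeasurableEquiv.coe_piCongrLeft, MeasurableEquiv.coe_sumPiEquivProdPi_symm,
    Equiv.piCongrLeft_apply_apply, Equiv.sumPiEquivProdPi_symm_apply]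
  cases j with
  | inl j => simp [Fin.append_left]
  | inr j => simp [Fin.append_right]

lemma lintegral_pi_one (G : (Fin 1 → E) → ℝ≥0∞) (hG : Measurable G) :
    ∫⁻ s, G s ∂(Measure.pi fun _ : Fin 1 => lam) = ∫⁻ x, G (fun _ => x) ∂lam := by
  have h1 := measurePreserving_funUnique lam (Fin 1)
  have hφ : Measurable fun x : E => G (fun _ => x) :=
    hG.comp (measurable_pi_lambda _ fun _ => measurable_id)
  rw [← h1.lintegral_comp hφ]
  refine lintegral_congr fun s => ?_
  congr 1
  exact funext fun i => congrArg s (Subsingleton.elim i default)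

end AUX


noncomputable def bwdPath {E : Type*} [MeasurableSpace E]
    (f : ℕ → E → E → ℝ≥0∞) (g : ℕ → E → ℝ≥0∞)
    (n c : ℕ) (x : E) (v : Fin c → E) : ℝ≥0∞ :=
  ∏ i : Fin c,
    g (n + 1 + (i : ℕ)) (v i) *
      f (n + 1 + (i : ℕ))
        (if _h : (i : ℕ) = 0 then x
          else v ⟨(i : ℕ) - 1, Nat.lt_of_le_of_lt (Nat.sub_le _ _) i.isLt⟩)
        (v i)

section MAIN

variable {E : Type*} [MeasurableSpace E] (lam : Measure E) [SigmaFinite lam]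
variable (f : ℕ → E → E → ℝ≥0∞) (g : ℕ → E → ℝ≥0∞)

lemma hmmBwdDens_eq_bwdPath (T n : ℕ) : hmmBwdDens f g T n = bwdPath f g n (T - n) := rfl

lemma vcongr {b : ℕ} (v : Fin b → E) {e1 e2 : ℕ} (p1 : e1 < b) (p2 : e2 < b)
    (h : e1 = e2) : v ⟨e1, p1⟩ = v ⟨e2, p2⟩ := by subst h; rfl

lemma meas_f_app {α : Type*} [MeasurableSpace α] {n : ℕ}
    (hfn : Measurable (fun p : E × E => f n p.1 p.2)) {u v : α → E}
    (hu : Measurable u) (hv : Measurable v) :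
    Measurable fun a => f n (u a) (v a) :=
  hfn.comp (hu.prodMk hv)

lemma gf_congr {L L' : ℕ} {p p' c c' : E} (hL : L = L') (hp : p = p') (hc : c = c') :
    g L c * f L p c = g L' c' * f L' p' c' := by
  subst hL; subst hp; subst hc; rfl

lemma bwd_cast (n c c' : ℕ) (h : c = c') (x : E) :
    (∫⁻ v : Fin c → E, bwdPath f g n c x v ∂(Measure.pi fun _ : Fin c => lam)) =
      ∫⁻ v : Fin c' → E, bwdPath f g n c' x v ∂(Measure.pi fun _ : Fin c' => lam) := by
  subst h; rfl

variable (hf : ∀ n, Measurable (fun p : E × E => f n p.1 p.2)) (hg : ∀ n, Measurable (g n))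

section Meas
include hf hg

lemma meas_hmmDens (x0 : E) (k : ℕ) : Measurable (hmmDens f g x0 k) := by
  unfold hmmDens
  refine Finset.measurable_prod _ fun i _ =>
    Measurable.mul ((hg _).comp (measurable_pi_apply i)) ?_
  by_cases h : (i : ℕ) = 0
  · simp only [dif_pos h]
    exact meas_f_app f (hf _) measurable_const (measurable_pi_apply i)
  · simp only [dif_neg h]
    exact meas_f_app f (hf _) (measurable_pi_apply _) (measurable_pi_apply i)

lemma meas_bwdPath (n c : ℕ) :
    Measurable fun p : E × (Fin c → E) => bwdPath f g n c p.1 p.2 := by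
  unfold bwdPath
  refine Finset.measurable_prod _ fun i _ =>
    Measurable.mul ((hg _).comp ((measurable_pi_apply i).comp measurable_snd)) ?_
  by_cases h : (i : ℕ) = 0
  · simp only [dif_pos h]
    exact meas_f_app f (hf _) measurable_fst ((measurable_pi_apply i).comp measurable_snd)
  · simp only [dif_neg h]
    exact meas_f_app f (hf _) ((measurable_pi_apply _).comp measurable_snd)
      ((measurable_pi_apply i).comp measurable_snd)

lemma meas_B (n c : ℕ) :
    Measurable fun x : E =>
      ∫⁻ v : Fin c → E, bwdPath f g n c x v ∂(Measure.pi fun _ => lam) :=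
  Measurable.lintegral_prod_right' (meas_bwdPath f g hf hg n c)

lemma meas_gammaFwd (x0 : E) (n : ℕ) : Measurable (gammaFwd lam f g x0 n) := by
  refine Measurable.lintegral_prod_right'
    (f := fun p : E × (Fin (n - 1) → E) =>
      hmmDens f g x0 (n - 1) p.2 *
        (g n p.1 *
          f n
            (if h : n - 1 = 0 then x0
              else p.2 ⟨n - 1 - 1, Nat.sub_lt (Nat.pos_of_ne_zero h) one_pos⟩)
            p.1)) ?_
  refine Measurable.mul ((meas_hmmDens f g hf hg x0 (n-1)).comp measurable_snd)
    (Measurable.mul ((hg n).comp measurable_fst) ?_)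
  by_cases h : n - 1 = 0
  · simp only [dif_pos h]
    exact meas_f_app f (hf n) measurable_const measurable_fst
  · simp only [dif_neg h]
    exact meas_f_app f (hf n) ((measurable_pi_apply _).comp measurable_snd) measurable_fst

end Meas

lemma factMain (x0 : E) (a b : ℕ) (u : Fin (a+1) → E) (x' : E) (v : Fin b → E) :
    hmmDens f g x0 ((a+1)+(1+b)) (Fin.append u (Fin.append (fun _ : Fin 1 => x') v)) =
      hmmDens f g x0 (a+1) u *
        ((g (a+2) x' * f (a+2) (u ⟨a, Nat.lt_succ_self a⟩) x') *
          bwdPath f g (a+2) b x' v) := by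
  have hW : ∀ j : Fin ((a+1)+(1+b)),
      Fin.append u (Fin.append (fun _ : Fin 1 => x') v) j =
        if h : (j:ℕ) < a+1 then u ⟨j, h⟩
        else if h2 : (j:ℕ) = a+1 then x' else v ⟨(j:ℕ) - (a+2), by omega⟩ := by
    intro j
    rw [fin_append_apply]
    by_cases h : (j:ℕ) < a+1
    · rw [dif_pos h, dif_pos h]
    · rw [dif_neg h, dif_neg h, fin_append_apply]
      by_cases h2 : (j:ℕ) = a+1
      · rw [dif_pos (show (j:ℕ) - (a+1) < 1 by omega), dif_pos h2]
      · rw [dif_neg (show ¬((j:ℕ) - (a+1) < 1) by omega), dif_neg h2]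
        exact vcongr v _ _ (by first | omega | (simp; omega) | simp)
  unfold hmmDens bwdPath
  conv_lhs => rw [Fin.prod_univ_add]
  congr 1
  · refine Finset.prod_congr rfl fun i _ => ?_
    simp only [hW, Fin.coe_castAdd]
    rw [dif_pos i.isLt]
    by_cases hi : (i : ℕ) = 0
    · rw [dif_pos hi, dif_pos hi]
    · rw [dif_neg hi, dif_neg hi, dif_pos (show (i:ℕ) - 1 < a + 1 by omega)]
  · conv_lhs => rw [Fin.prod_univ_add, Fin.prod_univ_one]
    congr 1
    · simp only [hW, Fin.coe_natAdd, Fin.coe_castAdd, Fin.val_zero]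
      rw [dif_neg (show ¬(a + 1 + 0 < a + 1) by omega), dif_pos trivial,
        dif_neg (show ¬(a + 1 + 0 = 0) by omega),
        dif_pos (show a + 1 + 0 - 1 < a + 1 by omega)]
      exact gf_congr f g (by omega) (vcongr u _ _ (by omega)) rfl
    · refine Finset.prod_congr rfl fun j _ => ?_
      simp only [hW, Fin.coe_natAdd]
      rw [dif_neg (show ¬(a + 1 + (1 + (j:ℕ)) < a + 1) by omega),
        dif_neg (show ¬(a + 1 + (1 + (j:ℕ)) = a + 1) by omega),
        dif_neg (show ¬(a + 1 + (1 + (j:ℕ)) = 0) by omega),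
        dif_neg (show ¬(a + 1 + (1 + (j:ℕ)) - 1 < a + 1) by omega)]
      by_cases hj : (j:ℕ) = 0
      · rw [dif_pos (show a + 1 + (1 + (j:ℕ)) - 1 = a + 1 by omega), dif_pos hj]
        exact gf_congr f g (by omega) rfl (vcongr v _ _ (by omega))
      · rw [dif_neg (show ¬(a + 1 + (1 + (j:ℕ)) - 1 = a + 1) by omega), dif_neg hj]
        exact gf_congr f g (by omega) (vcongr v _ _ (by omega)) (vcongr v _ _ (by omega))

lemma fact2 (x0 : E) (a : ℕ) (w : Fin a → E) (x : E) :
    hmmDens f g x0 (a+1) (Fin.append w (fun _ : Fin 1 => x)) =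
      hmmDens f g x0 a w *
        (g (a+1) x * f (a+1)
          (if _h : a = 0 then x0 else w ⟨a-1, by omega⟩) x) := by
  unfold hmmDens
  rw [Fin.prod_univ_add, Fin.prod_univ_one]
  congr 1
  · refine Finset.prod_congr rfl fun i _ => ?_
    simp only [fin_append_apply, Fin.coe_castAdd]
    rw [dif_pos i.isLt]
    obtain ⟨iv, hl⟩ := i
    by_cases hi : iv = 0
    · subst hi; simp
    · rw [dif_neg hi, dif_neg hi, dif_pos (show iv - 1 < a by omega)]
  · simp only [fin_append_apply, Fin.coe_natAdd, Fin.val_zero, Nat.add_zero]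
    rw [dif_neg (lt_irrefl a)]
    by_cases ha : a = 0
    · simp [ha]
    · rw [dif_neg (by omega : ¬ a = 0), dif_neg ha, dif_pos (show a - 1 < a by omega)]

include hf hg in
lemma key (x0 : E) (T t : ℕ) (ht : 2 ≤ t) (ht' : t ≤ T) :
    marginalLik lam f g x0 T =
      ∫⁻ x, gammaFwd lam f g x0 (t-1) x *
        ∫⁻ x', (g t x' * f t x x') *
          ∫⁻ v : Fin (T - t) → E, hmmBwdDens f g T t x' v
            ∂(Measure.pi fun _ => lam) ∂lam ∂lam := by
  obtain ⟨a, rfl⟩ : ∃ a, t = a + 2 := ⟨t - 2, by omega⟩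
  obtain ⟨b, rfl⟩ : ∃ b, T = (a+1) + (1+b) := ⟨T - (a+2), by omega⟩
  have mBb : Measurable fun x' : E =>
      ∫⁻ v : Fin b → E, bwdPath f g (a+2) b x' v ∂(Measure.pi fun _ => lam) :=
    meas_B lam f g hf hg (a+2) b
  have mP : ∀ x' : E, Measurable fun v : Fin b → E => bwdPath f g (a+2) b x' v :=
    fun x' => (meas_bwdPath f g hf hg (a+2) b).comp (measurable_const.prodMk measurable_id)
  have hBB : ∀ x' : E,
      (∫⁻ v : Fin ((a+1)+(1+b) - (a+2)) → E,
        hmmBwdDens f g ((a+1)+(1+b)) (a+2) x' v ∂(Measure.pi fun _ => lam)) =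
      ∫⁻ v : Fin b → E, bwdPath f g (a+2) b x' v ∂(Measure.pi fun _ => lam) :=
    fun x' => bwd_cast lam f g (a+2) _ b (by omega) x'
  have mC : Measurable fun x : E =>
      ∫⁻ x', (g (a+2) x' * f (a+2) x x') *
        (∫⁻ v : Fin b → E, bwdPath f g (a+2) b x' v ∂(Measure.pi fun _ => lam)) ∂lam := by
    refine Measurable.lintegral_prod_right'
      (f := fun q : E × E => (g (a+2) q.2 * f (a+2) q.1 q.2) *
        ∫⁻ v : Fin b → E, bwdPath f g (a+2) b q.2 v ∂(Measure.pi fun _ => lam)) ?_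
    exact (((hg _).comp measurable_snd).mul
      (meas_f_app f (hf _) measurable_fst measurable_snd)).mul (mBb.comp measurable_snd)
  have mCx : ∀ x : E, Measurable fun x' : E => (g (a+2) x' * f (a+2) x x') *
      ∫⁻ v : Fin b → E, bwdPath f g (a+2) b x' v ∂(Measure.pi fun _ => lam) :=
    fun x => ((hg _).mul (meas_f_app f (hf _) measurable_const measurable_id)).mul mBb
  have mK : Measurable fun p : (Fin a → E) × E =>
      hmmDens f g x0 a p.1 *
        (g (a+1) p.2 * f (a+1)
          (if _h : a = 0 then x0 else p.1 ⟨a-1, by omega⟩) p.2) := by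
    refine ((meas_hmmDens f g hf hg x0 a).comp measurable_fst).mul
      (((hg _).comp measurable_snd).mul ?_)
    by_cases h : a = 0
    · simp only [dif_pos h]
      exact meas_f_app f (hf _) measurable_const measurable_snd
    · simp only [dif_neg h]
      exact meas_f_app f (hf _) ((measurable_pi_apply _).comp measurable_fst) measurable_snd
  have mKx : ∀ x : E, Measurable fun w : Fin a → E =>
      hmmDens f g x0 a w *
        (g (a+1) x * f (a+1)
          (if _h : a = 0 then x0 else w ⟨a-1, by omega⟩) x) :=
    fun x => mK.comp (measurable_id.prodMk measurable_const)
  calc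
    marginalLik lam f g x0 ((a+1)+(1+b))
        = ∫⁻ u : Fin (a+1) → E, ∫⁻ r : Fin (1+b) → E,
            hmmDens f g x0 ((a+1)+(1+b)) (Fin.append u r)
              ∂(Measure.pi fun _ => lam) ∂(Measure.pi fun _ => lam) := by
          rw [marginalLik]
          exact lintegral_pi_split lam (a+1) (1+b) _ (meas_hmmDens f g hf hg x0 _)
    _ = ∫⁻ u : Fin (a+1) → E, ∫⁻ x' : E, ∫⁻ v : Fin b → E,
            hmmDens f g x0 ((a+1)+(1+b)) (Fin.append u (Fin.append (fun _ => x') v))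
              ∂(Measure.pi fun _ => lam) ∂lam ∂(Measure.pi fun _ => lam) := by
          refine lintegral_congr fun u => ?_
          rw [lintegral_pi_split lam 1 b
            (fun r => hmmDens f g x0 ((a+1)+(1+b)) (Fin.append u r))
            (show Measurable fun r : Fin (1+b) → E =>
                hmmDens f g x0 ((a+1)+(1+b)) (Fin.append u r) from
              (meas_hmmDens f g hf hg x0 _).comp (measurable_fin_append u))]
          rw [lintegral_pi_one lam _ (Measurable.lintegral_prod_right'
            (f := fun p : (Fin 1 → E) × (Fin b → E) =>
              hmmDens f g x0 ((a+1)+(1+b)) (Fin.append u (Fin.append p.1 p.2)))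
            ((meas_hmmDens f g hf hg x0 _).comp
              ((measurable_fin_append u).comp measurable_append_pair)))]
    _ = ∫⁻ u : Fin (a+1) → E, ∫⁻ x' : E,
            (hmmDens f g x0 (a+1) u *
              (g (a+2) x' * f (a+2) (u ⟨a, Nat.lt_succ_self a⟩) x')) *
            ∫⁻ v : Fin b → E, bwdPath f g (a+2) b x' v
              ∂(Measure.pi fun _ => lam) ∂lam ∂(Measure.pi fun _ => lam) := by
          refine lintegral_congr fun u => lintegral_congr fun x' => ?_
          simp only [factMain f g x0 a b u x', ← mul_assoc]
          exact lintegral_const_mul _ (mP x')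
    _ = ∫⁻ u : Fin (a+1) → E,
            hmmDens f g x0 (a+1) u *
            ∫⁻ x' : E, (g (a+2) x' * f (a+2) (u ⟨a, Nat.lt_succ_self a⟩) x') *
              (∫⁻ v : Fin b → E, bwdPath f g (a+2) b x' v ∂(Measure.pi fun _ => lam))
              ∂lam ∂(Measure.pi fun _ => lam) := by
          refine lintegral_congr fun u => ?_
          simp only [mul_assoc (hmmDens f g x0 (a+1) u)]
          exact lintegral_const_mul _ (mCx _)
    _ = ∫⁻ w : Fin a → E, ∫⁻ x : E,
            (hmmDens f g x0 a w * (g (a+1) x * f (a+1)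
              (if _h : a = 0 then x0 else w ⟨a-1, by omega⟩) x)) *
            ∫⁻ x' : E, (g (a+2) x' * f (a+2) x x') *
              (∫⁻ v : Fin b → E, bwdPath f g (a+2) b x' v ∂(Measure.pi fun _ => lam))
              ∂lam ∂lam ∂(Measure.pi fun _ => lam) := by
          rw [lintegral_pi_split lam a 1
            (fun u => hmmDens f g x0 (a+1) u *
              ∫⁻ x' : E, (g (a+2) x' * f (a+2) (u ⟨a, Nat.lt_succ_self a⟩) x') *
                (∫⁻ v : Fin b → E, bwdPath f g (a+2) b x' v ∂(Measure.pi fun _ => lam)) ∂lam)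
            (show Measurable fun u : Fin (a+1) → E => hmmDens f g x0 (a+1) u *
              ∫⁻ x' : E, (g (a+2) x' * f (a+2) (u ⟨a, Nat.lt_succ_self a⟩) x') *
                (∫⁻ v : Fin b → E, bwdPath f g (a+2) b x' v ∂(Measure.pi fun _ => lam)) ∂lam from
              (meas_hmmDens f g hf hg x0 (a+1)).mul (mC.comp (measurable_pi_apply _)))]
          refine lintegral_congr fun w => ?_
          rw [lintegral_pi_one lam _ (show Measurable fun s : Fin 1 → E =>
              hmmDens f g x0 (a+1) (Fin.append w s) *
              ∫⁻ x' : E, (g (a+2) x' * f (a+2) (Fin.append w s ⟨a, Nat.lt_succ_self a⟩) x') *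
                (∫⁻ v : Fin b → E, bwdPath f g (a+2) b x' v ∂(Measure.pi fun _ => lam)) ∂lam from
            (((meas_hmmDens f g hf hg x0 (a+1)).mul
              (mC.comp (measurable_pi_apply _))).comp (measurable_fin_append w)))]
          refine lintegral_congr fun x => ?_
          have hlast : Fin.append w (fun _ : Fin 1 => x) ⟨a, Nat.lt_succ_self a⟩ = x := by
            rw [fin_append_apply, dif_neg (lt_irrefl a)]
          simp only [fact2 f g x0 a w x, hlast]
    _ = ∫⁻ x : E, ∫⁻ w : Fin a → E,
            (hmmDens f g x0 a w * (g (a+1) x * f (a+1)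
              (if _h : a = 0 then x0 else w ⟨a-1, by omega⟩) x)) *
            ∫⁻ x' : E, (g (a+2) x' * f (a+2) x x') *
              (∫⁻ v : Fin b → E, bwdPath f g (a+2) b x' v ∂(Measure.pi fun _ => lam))
              ∂lam ∂(Measure.pi fun _ => lam) ∂lam := by
          exact lintegral_lintegral_swap (mK.mul (mC.comp measurable_snd)).aemeasurable
    _ = ∫⁻ x : E, gammaFwd lam f g x0 ((a+2)-1) x *
            ∫⁻ x' : E, (g (a+2) x' * f (a+2) x x') *
              (∫⁻ v : Fin b → E, bwdPath f g (a+2) b x' v ∂(Measure.pi fun _ => lam))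
              ∂lam ∂lam := by
          refine lintegral_congr fun x => ?_
          rw [lintegral_mul_const _ (mKx x)]
          rfl
    _ = ∫⁻ x : E, gammaFwd lam f g x0 ((a+2)-1) x *
            ∫⁻ x' : E, (g (a+2) x' * f (a+2) x x') *
              (∫⁻ v : Fin ((a+1)+(1+b) - (a+2)) → E,
                hmmBwdDens f g ((a+1)+(1+b)) (a+2) x' v ∂(Measure.pi fun _ => lam))
              ∂lam ∂lam := by
          refine lintegral_congr fun x => ?_
          congr 1
          refine lintegral_congr fun x' => ?_
          rw [hBB x']

end MAIN




/-- **Normalized generalized two-filter decomposition**: for `2 ≤ t ≤ T`, if the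
normalizing constants of the forward and backward filters are positive and finite, then
`p(y_{1:T}) = γ_{t-1}(1) γ̃_t(1) ∫∫ π_{t-1}(x) π̃_t(x') f_t(x,x')/ξ_t(x') λ(dx) λ(dx')`. -/
theorem two_filter_marginal_likelihood_normalized
    {E : Type*} [MeasurableSpace E] (lam : Measure E) [SigmaFinite lam]
    (T : ℕ) (hT : 1 ≤ T) (x0 : E)
    (f : ℕ → E → E → ℝ≥0∞) (g : ℕ → E → ℝ≥0∞) (ξ : ℕ → E → ℝ≥0∞)
    (hf : ∀ n, Measurable (fun p : E × E => f n p.1 p.2))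
    (hg : ∀ n, Measurable (g n)) (hξ : ∀ n, Measurable (ξ n))
    (hffin : ∀ n x x', f n x x' ≠ ∞) (hgfin : ∀ n x, g n x ≠ ∞)
    (hξpos : ∀ n x, 0 < ξ n x) (hξfin : ∀ n x, ξ n x ≠ ∞)
    (t : ℕ) (ht : 2 ≤ t) (ht' : t ≤ T)
    (hZf : 0 < ∫⁻ x, gammaFwd lam f g x0 (t - 1) x ∂lam)
    (hZf' : (∫⁻ x, gammaFwd lam f g x0 (t - 1) x ∂lam) ≠ ∞)
    (hZb : 0 < ∫⁻ x, gammaBwd lam f g ξ T t x ∂lam)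
    (hZb' : (∫⁻ x, gammaBwd lam f g ξ T t x ∂lam) ≠ ∞) :
    marginalLik lam f g x0 T =
      (∫⁻ x, gammaFwd lam f g x0 (t - 1) x ∂lam) *
        (∫⁻ x, gammaBwd lam f g ξ T t x ∂lam) *
        ∫⁻ x, ∫⁻ x',
          (gammaFwd lam f g x0 (t - 1) x / ∫⁻ z, gammaFwd lam f g x0 (t - 1) z ∂lam) *
            (gammaBwd lam f g ξ T t x' / ∫⁻ z, gammaBwd lam f g ξ T t z ∂lam) *
            f t x x' / ξ t x' ∂lam ∂lam := by
  have mB : Measurable fun x' : E =>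
      ∫⁻ v : Fin (T - t) → E, hmmBwdDens f g T t x' v ∂(Measure.pi fun _ => lam) :=
    meas_B lam f g hf hg t (T - t)
  have mγ : Measurable (gammaFwd lam f g x0 (t-1)) := meas_gammaFwd lam f g hf hg x0 (t-1)
  rw [key lam f g hf hg x0 T t ht ht']
  set Zf := ∫⁻ x, gammaFwd lam f g x0 (t - 1) x ∂lam with hZfdef
  set Zb := ∫⁻ x, gammaBwd lam f g ξ T t x ∂lam with hZbdef
  have hpoint : ∀ x x' : E,
      gammaFwd lam f g x0 (t-1) x / Zf * (gammaBwd lam f g ξ T t x' / Zb) * f t x x' / ξ t x'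
      = (Zf⁻¹ * Zb⁻¹) * (gammaFwd lam f g x0 (t-1) x * ((g t x' * f t x x') *
          ∫⁻ v : Fin (T - t) → E, hmmBwdDens f g T t x' v ∂(Measure.pi fun _ => lam))) := by
    intro x x'
    have hx0 : ξ t x' ≠ 0 := (hξpos t x').ne'
    have hxfin := hξfin t x'
    simp only [gammaBwd]
    generalize gammaFwd lam f g x0 (t - 1) x = γ
    generalize (∫⁻ v : Fin (T - t) → E, hmmBwdDens f g T t x' v
      ∂(Measure.pi fun _ => lam)) = B
    generalize hG : g t x' = G
    generalize hF : f t x x' = F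
    generalize hz : ξ t x' = z at hx0 hxfin
    rw [div_eq_mul_inv, div_eq_mul_inv, div_eq_mul_inv,
      show γ * Zf⁻¹ * (z * G * B * Zb⁻¹) * F * z⁻¹ =
        (z * z⁻¹) * (Zf⁻¹ * Zb⁻¹ * (γ * (G * F * B))) from by ring,
      ENNReal.mul_inv_cancel hx0 hxfin, one_mul]
  simp only [hpoint]
  have mJx : ∀ x : E, Measurable fun x' : E => (g t x' * f t x x') *
      ∫⁻ v : Fin (T - t) → E, hmmBwdDens f g T t x' v ∂(Measure.pi fun _ => lam) :=
    fun x => ((hg t).mul (meas_f_app f (hf t) measurable_const measurable_id)).mul mB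
  have mJ : Measurable fun x : E => gammaFwd lam f g x0 (t-1) x *
      ∫⁻ x', (g t x' * f t x x') *
        (∫⁻ v : Fin (T - t) → E, hmmBwdDens f g T t x' v ∂(Measure.pi fun _ => lam)) ∂lam := by
    refine mγ.mul (Measurable.lintegral_prod_right'
      (f := fun q : E × E => (g t q.2 * f t q.1 q.2) *
        ∫⁻ v : Fin (T - t) → E, hmmBwdDens f g T t q.2 v ∂(Measure.pi fun _ => lam)) ?_)
    exact (((hg t).comp measurable_snd).mul
      (meas_f_app f (hf t) measurable_fst measurable_snd)).mul (mB.comp measurable_snd)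
  have pull : (∫⁻ x, ∫⁻ x', (Zf⁻¹ * Zb⁻¹) * (gammaFwd lam f g x0 (t-1) x *
        ((g t x' * f t x x') *
          ∫⁻ v : Fin (T - t) → E, hmmBwdDens f g T t x' v ∂(Measure.pi fun _ => lam)))
        ∂lam ∂lam)
      = (Zf⁻¹ * Zb⁻¹) * ∫⁻ x, gammaFwd lam f g x0 (t-1) x *
          ∫⁻ x', (g t x' * f t x x') *
            (∫⁻ v : Fin (T - t) → E, hmmBwdDens f g T t x' v ∂(Measure.pi fun _ => lam))
            ∂lam ∂lam := by
    rw [← lintegral_const_mul (Zf⁻¹ * Zb⁻¹) mJ]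
    refine lintegral_congr fun x => ?_
    rw [show (fun x' : E => (Zf⁻¹ * Zb⁻¹) * (gammaFwd lam f g x0 (t-1) x *
          ((g t x' * f t x x') *
            ∫⁻ v : Fin (T - t) → E, hmmBwdDens f g T t x' v ∂(Measure.pi fun _ => lam))))
        = fun x' : E => ((Zf⁻¹ * Zb⁻¹) * gammaFwd lam f g x0 (t-1) x) *
          ((g t x' * f t x x') *
            ∫⁻ v : Fin (T - t) → E, hmmBwdDens f g T t x' v ∂(Measure.pi fun _ => lam))
      from funext fun x' => by ring]
    rw [lintegral_const_mul _ (mJx x), mul_assoc]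
  rw [pull,
    show Zf * Zb * ((Zf⁻¹ * Zb⁻¹) *
        ∫⁻ x, gammaFwd lam f g x0 (t-1) x *
          ∫⁻ x', (g t x' * f t x x') *
            (∫⁻ v : Fin (T - t) → E, hmmBwdDens f g T t x' v ∂(Measure.pi fun _ => lam))
            ∂lam ∂lam)
      = (Zf * Zf⁻¹) * ((Zb * Zb⁻¹) *
        ∫⁻ x, gammaFwd lam f g x0 (t-1) x *
          ∫⁻ x', (g t x' * f t x x') *
            (∫⁻ v : Fin (T - t) → E, hmmBwdDens f g T t x' v ∂(Measure.pi fun _ => lam))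
            ∂lam ∂lam) from by ring,
    ENNReal.mul_inv_cancel hZf.ne' hZf', ENNReal.mul_inv_cancel hZb.ne' hZb',
    one_mul, one_mul]
end

section
/- Importance-weighted two-filter representation of the marginal likelihood: for every integer t with 3 ≤ t ≤ T − 1, one has p(y_{1:T}) = ∫_{E^4} γ_{t−2}(x_{t−2}) · γ̃_{t+1}(x_{t+1}) · q_{t−1}(x_{t−2}, x_{t−1}) · q̃_t(x_{t+1}, x_t) · W_{t−1}(x_{t−2}, x_{t−1}) · W̃_t(x_t, x_{t+1}) · f_t(x_{t−1}, x_t) / ξ_t(x_t) λ^{⊗4}(d(x_{t−2}, x_{t−1}, x_t, x_{t+1})), as an equality in [0,∞]. -/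
open MeasureTheory ENNReal

/-- Forward incremental importance weight `W_n(x', x) = g_n(x) f_n(x', x) / q_n(x', x)`. -/
noncomputable def fwdWeight {E : Type*}
    (f : ℕ → E → E → ℝ≥0∞) (g : ℕ → E → ℝ≥0∞) (q : ℕ → E → E → ℝ≥0∞)
    (n : ℕ) (x' x : E) : ℝ≥0∞ :=
  g n x * f n x' x / q n x' x

/-- Backward incremental importance weight
`W̃_n(x, x'') = ξ_n(x) g_n(x) f_{n+1}(x, x'') / (ξ_{n+1}(x'') q̃_n(x'', x))`. -/
noncomputable def bwdWeight {E : Type*}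
    (f : ℕ → E → E → ℝ≥0∞) (g : ℕ → E → ℝ≥0∞) (ξ : ℕ → E → ℝ≥0∞)
    (qb : ℕ → E → E → ℝ≥0∞) (n : ℕ) (x x'' : E) : ℝ≥0∞ :=
  ξ n x * g n x * f (n + 1) x x'' / (ξ (n + 1) x'' * qb n x'' x)

namespace TwoFilterAux

variable {E : Type*} [MeasurableSpace E]

theorem cons_mk {k : ℕ} (y : E) (v : Fin k → E) (j : ℕ) (hj : j < k + 1) :
    (Fin.cons y v : Fin (k + 1) → E) ⟨j, hj⟩ =
      if h : j = 0 then y else v ⟨j - 1, by omega⟩ := by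
  cases j with
  | zero =>
    have h0 : (⟨0, hj⟩ : Fin (k + 1)) = 0 := by ext; simp
    rw [h0, Fin.cons_zero, dif_pos rfl]
  | succ m =>
    have h0 : (⟨m + 1, hj⟩ : Fin (k + 1)) = Fin.succ ⟨m, by omega⟩ := by ext; simp
    rw [h0, Fin.cons_succ, dif_neg (by omega : ¬(m + 1 = 0))]
    exact congrArg v (by ext; simp)

theorem snoc_mk {k : ℕ} (u : Fin k → E) (z : E) (j : ℕ) (hj : j < k + 1) :
    (Fin.snoc u z : Fin (k + 1) → E) ⟨j, hj⟩ =
      if h : j < k then u ⟨j, h⟩ else z := by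
  by_cases h : j < k
  · have h0 : (⟨j, hj⟩ : Fin (k + 1)) = Fin.castSucc ⟨j, h⟩ := by ext; simp
    rw [h0, Fin.snoc_castSucc, dif_pos h]
  · have hjk : j = k := by omega
    subst hjk
    have h0 : (⟨j, hj⟩ : Fin (j + 1)) = Fin.last j := by ext; simp
    rw [h0, Fin.snoc_last, dif_neg h]

/-- Generic block density. -/
noncomputable def bP (f : ℕ → E → E → ℝ≥0∞) (g : ℕ → E → ℝ≥0∞)
    (a k : ℕ) (x : E) (v : Fin k → E) : ℝ≥0∞ :=
  ∏ i : Fin k,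
    g (a + 1 + (i : ℕ)) (v i) *
      f (a + 1 + (i : ℕ))
        (if _h : (i : ℕ) = 0 then x
          else v ⟨(i : ℕ) - 1, Nat.lt_of_le_of_lt (Nat.sub_le _ _) i.isLt⟩)
        (v i)

/-- Integral of a block density over all its coordinates. -/
noncomputable def BI (lam : Measure E) (f : ℕ → E → E → ℝ≥0∞)
    (g : ℕ → E → ℝ≥0∞) (a k : ℕ) (x : E) : ℝ≥0∞ :=
  ∫⁻ v : Fin k → E, bP f g a k x v ∂(Measure.pi fun _ => lam)

/-- Forward filter in generic form. -/
noncomputable def AF (lam : Measure E) (f : ℕ → E → E → ℝ≥0∞)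
    (g : ℕ → E → ℝ≥0∞) (x0 : E) (k : ℕ) (x : E) : ℝ≥0∞ :=
  ∫⁻ u : Fin k → E,
    bP f g 0 k x0 u *
      (g (k + 1) x *
        f (k + 1)
          (if h : k = 0 then x0
            else u ⟨k - 1, Nat.sub_lt (Nat.pos_of_ne_zero h) one_pos⟩)
          x) ∂(Measure.pi fun _ => lam)

theorem bP_zero {f : ℕ → E → E → ℝ≥0∞} {g : ℕ → E → ℝ≥0∞}
    (a : ℕ) (x : E) (v : Fin 0 → E) : bP f g a 0 x v = 1 := by
  simp [bP]

theorem bP_cons {f : ℕ → E → E → ℝ≥0∞} {g : ℕ → E → ℝ≥0∞}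
    (a k : ℕ) (x y : E) (v : Fin k → E) :
    bP f g a (k + 1) x (Fin.cons y v) =
      g (a + 1) y * f (a + 1) x y * bP f g (a + 1) k y v := by
  unfold bP
  rw [Fin.prod_univ_succ]
  refine congrArg₂ (· * ·) ?_ (Finset.prod_congr rfl fun i _ => ?_)
  · simp
  · simp only [Fin.val_succ, Fin.cons_succ]
    rw [dif_neg (by omega : ¬((i : ℕ) + 1 = 0)), cons_mk,
      show a + 1 + ((i : ℕ) + 1) = a + 1 + 1 + (i : ℕ) from by omega]
    simp only [Nat.add_sub_cancel]

theorem bP_snoc {f : ℕ → E → E → ℝ≥0∞} {g : ℕ → E → ℝ≥0∞}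
    (a k : ℕ) (x z : E) (u : Fin k → E) :
    bP f g a (k + 1) x (Fin.snoc u z) =
      bP f g a k x u *
        (g (a + 1 + k) z *
          f (a + 1 + k)
            (if h : k = 0 then x
              else u ⟨k - 1, Nat.sub_lt (Nat.pos_of_ne_zero h) one_pos⟩)
            z) := by
  unfold bP
  rw [Fin.prod_univ_castSucc]
  congr 1
  · refine Finset.prod_congr rfl fun i _ => ?_
    simp only [Fin.coe_castSucc, Fin.snoc_castSucc]
    congr 1
    by_cases h : (i : ℕ) = 0
    · rw [dif_pos h, dif_pos h]
    · rw [dif_neg h, dif_neg h, snoc_mk,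
        dif_pos (Nat.lt_of_le_of_lt (Nat.sub_le _ _) i.isLt)]
  · simp only [Fin.val_last, Fin.snoc_last]
    congr 1
    by_cases h : k = 0
    · rw [dif_pos h, dif_pos h]
    · rw [dif_neg h, dif_neg h, snoc_mk,
        dif_pos (Nat.sub_lt (Nat.pos_of_ne_zero h) one_pos)]

section withlam

variable {lam : Measure E} [SigmaFinite lam]
variable {f : ℕ → E → E → ℝ≥0∞} {g : ℕ → E → ℝ≥0∞}
variable (hf : ∀ n, Measurable (fun p : E × E => f n p.1 p.2))
variable (hg : ∀ n, Measurable (g n))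

include hf hg

theorem meas_bP (a k : ℕ) :
    Measurable (fun p : E × (Fin k → E) => bP f g a k p.1 p.2) := by
  unfold bP
  apply Finset.measurable_prod
  intro i _
  by_cases h : (i : ℕ) = 0
  · simp only [dif_pos h]
    exact ((hg _).comp ((measurable_pi_apply i).comp measurable_snd)).mul
      ((hf _).comp (measurable_fst.prodMk ((measurable_pi_apply i).comp measurable_snd)))
  · simp only [dif_neg h]
    refine Measurable.mul ((hg _).comp ((measurable_pi_apply i).comp measurable_snd)) ?_
    have h1 : Measurable fun p : E × (Fin k → E) =>
        p.2 ⟨(i : ℕ) - 1, Nat.lt_of_le_of_lt (Nat.sub_le _ _) i.isLt⟩ :=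
      (measurable_pi_apply _).comp measurable_snd
    have h2 : Measurable fun p : E × (Fin k → E) => p.2 i :=
      (measurable_pi_apply _).comp measurable_snd
    exact (hf _).comp (h1.prodMk h2)

theorem meas_bP_snd (a k : ℕ) (x : E) :
    Measurable (fun v : Fin k → E => bP f g a k x v) :=
  (meas_bP hf hg a k).comp measurable_prodMk_left

theorem meas_BI (a k : ℕ) : Measurable (BI lam f g a k) :=
  Measurable.lintegral_prod_right' (meas_bP hf hg a k)

theorem meas_AF (x0 : E) (k : ℕ) : Measurable (AF lam f g x0 k) := by
  apply Measurable.lintegral_prod_right'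
    (f := fun p : E × (Fin k → E) =>
      bP f g 0 k x0 p.2 *
        (g (k + 1) p.1 *
          f (k + 1)
            (if h : k = 0 then x0
              else p.2 ⟨k - 1, Nat.sub_lt (Nat.pos_of_ne_zero h) one_pos⟩)
            p.1))
  by_cases h : k = 0
  · simp only [dif_pos h]
    exact ((meas_bP_snd hf hg 0 k x0).comp measurable_snd).mul
      (((hg _).comp measurable_fst).mul
        ((hf _).comp (measurable_const.prodMk measurable_fst)))
  · simp only [dif_neg h]
    refine Measurable.mul ((meas_bP_snd hf hg 0 k x0).comp measurable_snd) ?_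
    refine Measurable.mul ((hg _).comp measurable_fst) ?_
    have h1 : Measurable fun p : E × (Fin k → E) =>
        p.2 ⟨k - 1, Nat.sub_lt (Nat.pos_of_ne_zero h) one_pos⟩ :=
      (measurable_pi_apply _).comp measurable_snd
    exact (hf _).comp (h1.prodMk measurable_fst)

omit hf hg

theorem lintegral_fin_zero (c : ℝ≥0∞) :
    ∫⁻ _ : Fin 0 → E, c ∂(Measure.pi fun _ : Fin 0 => lam) = c := by
  rw [lintegral_const, Measure.pi_univ]
  simp

variable (lam) in
/-- Change of variables: peel the last coordinate. -/
theorem lintegral_snoc (m : ℕ) (F : (Fin (m + 1) → E) → ℝ≥0∞) (hF : Measurable F) :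
    ∫⁻ w : Fin (m + 1) → E, F w ∂(Measure.pi fun _ => lam) =
      ∫⁻ x, ∫⁻ u : Fin m → E, F (Fin.snoc u x) ∂(Measure.pi fun _ => lam) ∂lam := by
  have h := (measurePreserving_piFinSuccAbove (fun _ : Fin (m + 1) => lam) (Fin.last m)).symm
  calc ∫⁻ w : Fin (m + 1) → E, F w ∂(Measure.pi fun _ => lam)
      = ∫⁻ p : E × (Fin m → E),
          F ((MeasurableEquiv.piFinSuccAbove (fun _ => E) (Fin.last m)).symm p)
            ∂(lam.prod (Measure.pi fun _ => lam)) := (h.lintegral_comp hF).symm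
    _ = ∫⁻ x, ∫⁻ u : Fin m → E,
          F ((MeasurableEquiv.piFinSuccAbove (fun _ => E) (Fin.last m)).symm (x, u))
            ∂(Measure.pi fun _ => lam) ∂lam :=
        lintegral_prod _ ((hF.comp (MeasurableEquiv.measurable _)).aemeasurable)
    _ = ∫⁻ x, ∫⁻ u : Fin m → E, F (Fin.snoc u x) ∂(Measure.pi fun _ => lam) ∂lam := by
        refine lintegral_congr fun x => lintegral_congr fun u => ?_
        congr 1
        simp [MeasurableEquiv.piFinSuccAbove_symm_apply, Fin.insertNth_last', Fin.snocEquiv]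

variable (lam) in
/-- Change of variables: peel the first coordinate. -/
theorem lintegral_cons (m : ℕ) (F : (Fin (m + 1) → E) → ℝ≥0∞) (hF : Measurable F) :
    ∫⁻ w : Fin (m + 1) → E, F w ∂(Measure.pi fun _ => lam) =
      ∫⁻ x, ∫⁻ u : Fin m → E, F (Fin.cons x u) ∂(Measure.pi fun _ => lam) ∂lam := by
  have h := (measurePreserving_piFinSuccAbove (fun _ : Fin (m + 1) => lam) 0).symm
  calc ∫⁻ w : Fin (m + 1) → E, F w ∂(Measure.pi fun _ => lam)
      = ∫⁻ p : E × (Fin m → E),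
          F ((MeasurableEquiv.piFinSuccAbove (fun _ => E) 0).symm p)
            ∂(lam.prod (Measure.pi fun _ => lam)) := (h.lintegral_comp hF).symm
    _ = ∫⁻ x, ∫⁻ u : Fin m → E,
          F ((MeasurableEquiv.piFinSuccAbove (fun _ => E) 0).symm (x, u))
            ∂(Measure.pi fun _ => lam) ∂lam :=
        lintegral_prod _ ((hF.comp (MeasurableEquiv.measurable _)).aemeasurable)
    _ = ∫⁻ x, ∫⁻ u : Fin m → E, F (Fin.cons x u) ∂(Measure.pi fun _ => lam) ∂lam := by
        refine lintegral_congr fun x => lintegral_congr fun u => ?_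
        congr 1
        simp [MeasurableEquiv.piFinSuccAbove_symm_apply, Fin.insertNth_zero', Fin.consEquiv]

include hf hg

theorem BI_zero (a : ℕ) (x : E) : BI lam f g a 0 x = 1 := by
  unfold BI
  rw [lintegral_congr (fun v => bP_zero a x v), lintegral_fin_zero]

theorem BI_succ (a k : ℕ) (x : E) :
    BI lam f g a (k + 1) x =
      ∫⁻ y, g (a + 1) y * f (a + 1) x y * BI lam f g (a + 1) k y ∂lam := by
  unfold BI
  rw [lintegral_cons lam k _ (meas_bP_snd hf hg a (k + 1) x)]
  refine lintegral_congr fun y => ?_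
  rw [lintegral_congr fun v => bP_cons a k x y v,
    lintegral_const_mul _ (meas_bP_snd hf hg (a + 1) k y)]

theorem AF_zero (x0 x : E) :
    AF lam f g x0 0 x = g 1 x * f 1 x0 x := by
  unfold AF
  refine Eq.trans (lintegral_congr fun u : Fin 0 → E => ?_) (lintegral_fin_zero _)
  rw [bP_zero, one_mul, dif_pos rfl]

theorem AF_succ (x0 : E) (k : ℕ) (x : E) :
    AF lam f g x0 (k + 1) x =
      ∫⁻ y, AF lam f g x0 k y * (g (k + 2) x * f (k + 2) y x) ∂lam := by
  unfold AF
  have hFmeas : Measurable fun u : Fin (k + 1) → E =>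
      bP f g 0 (k + 1) x0 u *
        (g (k + 1 + 1) x *
          f (k + 1 + 1)
            (if h : k + 1 = 0 then x0
              else u ⟨k + 1 - 1, Nat.sub_lt (Nat.pos_of_ne_zero h) one_pos⟩)
            x) := by
    apply (meas_bP_snd hf hg 0 (k + 1) x0).mul
    apply measurable_const.mul
    simp only [dif_neg (by omega : ¬(k + 1 = 0))]
    have h1 : Measurable fun u : Fin (k + 1) → E =>
        u ⟨k + 1 - 1, Nat.sub_lt (Nat.pos_of_ne_zero (by omega)) one_pos⟩ :=
      measurable_pi_apply _
    exact (hf _).comp (h1.prodMk measurable_const)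
  rw [lintegral_snoc lam k _ hFmeas]
  refine lintegral_congr fun y => ?_
  have key : ∀ u : Fin k → E,
      bP f g 0 (k + 1) x0 (Fin.snoc u y) *
        (g (k + 1 + 1) x *
          f (k + 1 + 1)
            (if h : k + 1 = 0 then x0
              else (Fin.snoc u y : Fin (k + 1) → E)
                ⟨k + 1 - 1, Nat.sub_lt (Nat.pos_of_ne_zero h) one_pos⟩)
            x) =
      (bP f g 0 k x0 u *
        (g (k + 1) y *
          f (k + 1)
            (if h : k = 0 then x0
              else u ⟨k - 1, Nat.sub_lt (Nat.pos_of_ne_zero h) one_pos⟩)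
            y)) * (g (k + 2) x * f (k + 2) y x) := by
    intro u
    rw [dif_neg (by omega : ¬(k + 1 = 0)), snoc_mk, dif_neg (by omega : ¬(k + 1 - 1 < k)),
      bP_snoc, show (0 : ℕ) + 1 + k = k + 1 from by omega,
      show k + 1 + 1 = k + 2 from rfl]
  have hm : Measurable fun u : Fin k → E =>
      bP f g 0 k x0 u *
        (g (k + 1) y *
          f (k + 1)
            (if h : k = 0 then x0
              else u ⟨k - 1, Nat.sub_lt (Nat.pos_of_ne_zero h) one_pos⟩)
            y) := by
    apply (meas_bP_snd hf hg 0 k x0).mul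
    apply measurable_const.mul
    by_cases h : k = 0
    · simp only [dif_pos h]
      exact (hf _).comp (measurable_const.prodMk measurable_const)
    · simp only [dif_neg h]
      have h1 : Measurable fun u : Fin k → E =>
          u ⟨k - 1, Nat.sub_lt (Nat.pos_of_ne_zero h) one_pos⟩ := measurable_pi_apply _
      exact (hf _).comp (h1.prodMk measurable_const)
  rw [lintegral_congr key, lintegral_mul_const _ hm]

/-- Key two-filter split. -/
theorem key_split (x0 : E) : ∀ k j : ℕ,
    BI lam f g 0 (k + 1 + j) x0 =
      ∫⁻ x, AF lam f g x0 k x * BI lam f g (k + 1) j x ∂lam := by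
  intro k
  induction k with
  | zero =>
    intro j
    rw [show 0 + 1 + j = j + 1 from by omega, BI_succ hf hg]
    refine lintegral_congr fun y => ?_
    rw [AF_zero hf hg]
  | succ k ih =>
    intro j
    rw [show k + 1 + 1 + j = k + 1 + (j + 1) from by omega, ih (j + 1)]
    have step : ∀ x, AF lam f g x0 k x * BI lam f g (k + 1) (j + 1) x =
        ∫⁻ y, AF lam f g x0 k x *
          (g (k + 2) y * f (k + 2) x y * BI lam f g (k + 2) j y) ∂lam := by
      intro x
      rw [BI_succ hf hg (k + 1) j x, ← lintegral_const_mul]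
      exact ((hg _).mul ((hf _).comp measurable_prodMk_left)).mul
        (meas_BI hf hg (k + 2) j)
    rw [lintegral_congr step]
    rw [lintegral_lintegral_swap]
    · refine lintegral_congr fun y => ?_
      have rearr : ∀ x, AF lam f g x0 k x *
          (g (k + 2) y * f (k + 2) x y * BI lam f g (k + 2) j y) =
          (AF lam f g x0 k x * (g (k + 2) y * f (k + 2) x y)) *
            BI lam f g (k + 2) j y := by intro x; ring
      have hm : Measurable fun x : E =>
          AF lam f g x0 k x * (g (k + 2) y * f (k + 2) x y) := by
        apply (meas_AF hf hg x0 k).mul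
        apply measurable_const.mul
        exact (hf _).comp (measurable_id.prodMk measurable_const)
      rw [lintegral_congr rearr, lintegral_mul_const _ hm, ← AF_succ hf hg]
    · exact (((meas_AF hf hg x0 k).comp measurable_fst).mul
        ((((hg _).comp measurable_snd).mul (hf _)).mul
          ((meas_BI hf hg (k + 2) j).comp measurable_snd))).aemeasurable

end withlam

theorem alg (Γ B gm fm gt ft gp fp Q QB ξt ξp : ℝ≥0∞)
    (hQ0 : Q ≠ 0) (hQ : Q ≠ ∞) (hQB0 : QB ≠ 0) (hQB : QB ≠ ∞)
    (hξt0 : ξt ≠ 0) (hξt : ξt ≠ ∞) (hξp0 : ξp ≠ 0) (hξp : ξp ≠ ∞) :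
    Γ * (ξp * gp * B) * Q * QB * (gm * fm / Q) * (ξt * gt * fp / (ξp * QB)) * ft / ξt
      = Γ * (gm * fm * (gt * ft * (gp * fp * B))) := by
  rw [div_eq_mul_inv, div_eq_mul_inv, div_eq_mul_inv,
    ENNReal.mul_inv (Or.inl hξp0) (Or.inl hξp)]
  calc Γ * (ξp * gp * B) * Q * QB * (gm * fm * Q⁻¹) *
        (ξt * gt * fp * (ξp⁻¹ * QB⁻¹)) * ft * ξt⁻¹
      = (Q * Q⁻¹) * ((QB * QB⁻¹) * ((ξp * ξp⁻¹) * ((ξt * ξt⁻¹) *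
          (Γ * (gm * fm * (gt * ft * (gp * fp * B))))))) := by ring
    _ = Γ * (gm * fm * (gt * ft * (gp * fp * B))) := by
        rw [ENNReal.mul_inv_cancel hQ0 hQ, ENNReal.mul_inv_cancel hQB0 hQB,
          ENNReal.mul_inv_cancel hξp0 hξp, ENNReal.mul_inv_cancel hξt0 hξt]
        ring

theorem hmmDens_eq_bP {f : ℕ → E → E → ℝ≥0∞} {g : ℕ → E → ℝ≥0∞}
    (x0 : E) (k : ℕ) (x : Fin k → E) :
    hmmDens f g x0 k x = bP f g 0 k x0 x := by
  unfold hmmDens bP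
  refine Finset.prod_congr rfl fun i _ => ?_
  rw [show (0 : ℕ) + 1 + (i : ℕ) = (i : ℕ) + 1 from by omega]

theorem marginalLik_eq (lam : Measure E) (f : ℕ → E → E → ℝ≥0∞) (g : ℕ → E → ℝ≥0∞)
    (x0 : E) (T : ℕ) : marginalLik lam f g x0 T = BI lam f g 0 T x0 :=
  lintegral_congr fun x => hmmDens_eq_bP x0 T x

theorem gammaFwd_eq (lam : Measure E) (f : ℕ → E → E → ℝ≥0∞) (g : ℕ → E → ℝ≥0∞)
    (x0 : E) (k : ℕ) (x : E) :
    gammaFwd lam f g x0 (k + 1) x = AF lam f g x0 k x := by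
  unfold gammaFwd AF
  refine lintegral_congr fun u => ?_
  rw [hmmDens_eq_bP]
  exact congrArg₂ (· * ·) rfl rfl

theorem gammaBwd_eq (lam : Measure E) (f : ℕ → E → E → ℝ≥0∞) (g : ℕ → E → ℝ≥0∞)
    (ξ : ℕ → E → ℝ≥0∞) (T n : ℕ) (x : E) :
    gammaBwd lam f g ξ T n x = ξ n x * g n x * BI lam f g n (T - n) x := rfl

end TwoFilterAux

/-- **Importance-weighted two-filter representation of the marginal likelihood**:
for `3 ≤ t ≤ T - 1`,
`p(y_{1:T}) = ∫_{E⁴} γ_{t-2}(x_{t-2}) γ̃_{t+1}(x_{t+1}) q_{t-1}(x_{t-2},x_{t-1})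
q̃_t(x_{t+1},x_t) W_{t-1}(x_{t-2},x_{t-1}) W̃_t(x_t,x_{t+1}) f_t(x_{t-1},x_t)/ξ_t(x_t)
λ^{⊗4}(d(x_{t-2},x_{t-1},x_t,x_{t+1}))`. -/
theorem two_filter_marginal_likelihood_importance_weighted
    {E : Type*} [MeasurableSpace E] (lam : Measure E) [SigmaFinite lam]
    (T : ℕ) (hT : 1 ≤ T) (x0 : E)
    (f : ℕ → E → E → ℝ≥0∞) (g : ℕ → E → ℝ≥0∞) (ξ : ℕ → E → ℝ≥0∞)
    (hf : ∀ n, Measurable (fun p : E × E => f n p.1 p.2))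
    (hg : ∀ n, Measurable (g n)) (hξ : ∀ n, Measurable (ξ n))
    (hffin : ∀ n x x', f n x x' ≠ ∞) (hgfin : ∀ n x, g n x ≠ ∞)
    (hξpos : ∀ n x, 0 < ξ n x) (hξfin : ∀ n x, ξ n x ≠ ∞)
    (q qb : ℕ → E → E → ℝ≥0∞)
    (hq : ∀ n, Measurable (fun p : E × E => q n p.1 p.2))
    (hqb : ∀ n, Measurable (fun p : E × E => qb n p.1 p.2))
    (hqpos : ∀ n x x', 0 < q n x x') (hqfin : ∀ n x x', q n x x' ≠ ∞)
    (hqbpos : ∀ n x x', 0 < qb n x x') (hqbfin : ∀ n x x', qb n x x' ≠ ∞)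
    (t : ℕ) (ht : 3 ≤ t) (ht' : t ≤ T - 1) :
    marginalLik lam f g x0 T =
      ∫⁻ xtm2, ∫⁻ xtm1, ∫⁻ xt, ∫⁻ xtp1,
        gammaFwd lam f g x0 (t - 2) xtm2 * gammaBwd lam f g ξ T (t + 1) xtp1 *
          q (t - 1) xtm2 xtm1 * qb t xtp1 xt *
          fwdWeight f g q (t - 1) xtm2 xtm1 * bwdWeight f g ξ qb t xt xtp1 *
          f t xtm1 xt / ξ t xt ∂lam ∂lam ∂lam ∂lam := by
  classical
  open TwoFilterAux in
  have hT1 : t + 1 ≤ T := by omega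
  -- backward peeling lemmas
  have e1 : ∀ a : E, BI lam f g (t - 2) (T - (t - 2)) a =
      ∫⁻ b, g (t - 1) b * f (t - 1) a b *
        BI lam f g (t - 1) (T - (t + 1) + 1 + 1) b ∂lam := by
    intro a
    rw [show T - (t - 2) = T - (t + 1) + 1 + 1 + 1 from by omega, BI_succ hf hg,
      show t - 2 + 1 = t - 1 from by omega]
  have e2 : ∀ b : E, BI lam f g (t - 1) (T - (t + 1) + 1 + 1) b =
      ∫⁻ c, g t c * f t b c * BI lam f g t (T - (t + 1) + 1) c ∂lam := by
    intro b
    rw [BI_succ hf hg, show t - 1 + 1 = t from by omega]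
  have e3 : ∀ c : E, BI lam f g t (T - (t + 1) + 1) c =
      ∫⁻ d, g (t + 1) d * f (t + 1) c d * BI lam f g (t + 1) (T - (t + 1)) d ∂lam := by
    intro c
    rw [BI_succ hf hg]
  -- split the marginal likelihood at time t - 2
  have h1 : marginalLik lam f g x0 T =
      ∫⁻ a, AF lam f g x0 (t - 3) a * BI lam f g (t - 2) (T - (t - 2)) a ∂lam := by
    calc marginalLik lam f g x0 T
        = BI lam f g 0 (t - 3 + 1 + (T - (t - 2))) x0 := by
          rw [marginalLik_eq]
          exact congrArg (fun m => BI lam f g 0 m x0) (by omega)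
      _ = ∫⁻ a, AF lam f g x0 (t - 3) a *
            BI lam f g (t - 3 + 1) (T - (t - 2)) a ∂lam := key_split hf hg x0 (t - 3) (T - (t - 2))
      _ = ∫⁻ a, AF lam f g x0 (t - 3) a *
            BI lam f g (t - 2) (T - (t - 2)) a ∂lam := by
          rw [show t - 3 + 1 = t - 2 from by omega]
  -- canonical nested form
  have canon : (∫⁻ a, AF lam f g x0 (t - 3) a * BI lam f g (t - 2) (T - (t - 2)) a ∂lam) =
      ∫⁻ a, ∫⁻ b, ∫⁻ c, ∫⁻ d,
        AF lam f g x0 (t - 3) a *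
          (g (t - 1) b * f (t - 1) a b *
            (g t c * f t b c *
              (g (t + 1) d * f (t + 1) c d *
                BI lam f g (t + 1) (T - (t + 1)) d))) ∂lam ∂lam ∂lam ∂lam := by
    refine lintegral_congr fun a => ?_
    rw [e1 a, ← lintegral_const_mul]
    refine lintegral_congr fun b => ?_
    rw [e2 b, ← lintegral_const_mul, ← lintegral_const_mul]
    refine lintegral_congr fun c => ?_
    rw [e3 c, ← lintegral_const_mul, ← lintegral_const_mul, ← lintegral_const_mul]
    all_goals
      repeat' apply Measurable.mul
    all_goals
      first
        | exact hg _
        | exact measurable_const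
        | exact meas_BI hf hg _ _
        | exact (hf _).comp (measurable_const.prodMk measurable_id)
  -- identify the right-hand side with the canonical form
  have rhs_eq : (∫⁻ xtm2, ∫⁻ xtm1, ∫⁻ xt, ∫⁻ xtp1,
        gammaFwd lam f g x0 (t - 2) xtm2 * gammaBwd lam f g ξ T (t + 1) xtp1 *
          q (t - 1) xtm2 xtm1 * qb t xtp1 xt *
          fwdWeight f g q (t - 1) xtm2 xtm1 * bwdWeight f g ξ qb t xt xtp1 *
          f t xtm1 xt / ξ t xt ∂lam ∂lam ∂lam ∂lam) =
      ∫⁻ a, ∫⁻ b, ∫⁻ c, ∫⁻ d,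
        AF lam f g x0 (t - 3) a *
          (g (t - 1) b * f (t - 1) a b *
            (g t c * f t b c *
              (g (t + 1) d * f (t + 1) c d *
                BI lam f g (t + 1) (T - (t + 1)) d))) ∂lam ∂lam ∂lam ∂lam := by
    refine lintegral_congr fun a => lintegral_congr fun b =>
      lintegral_congr fun c => lintegral_congr fun d => ?_
    rw [show t - 2 = t - 3 + 1 from by omega, gammaFwd_eq, gammaBwd_eq]
    unfold fwdWeight bwdWeight
    exact alg _ _ _ _ _ _ _ _ _ _ _ _
      (hqpos _ _ _).ne' (hqfin _ _ _) (hqbpos _ _ _).ne' (hqbfin _ _ _)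
      (hξpos _ _).ne' (hξfin _ _) (hξpos _ _).ne' (hξfin _ _)
  rw [h1, canon, rhs_eq]
end

section
/- Two-filter representation of a smoothing functional: for every integer t with 2 ≤ t ≤ T − 1 and every measurable φ : E → [0,∞], one has ∫_{E^T} φ(x_t) ∏_{n=1}^T g_n(x_n) f_n(x_{n−1}, x_n) λ^{⊗T}(d(x_1,…,x_T)) = ∫_E ∫_E ∫_E γ_{t−1}(x_{t−1}) · γ̃_{t+1}(x_{t+1}) · φ(x_t) · g_t(x_t) · f_t(x_{t−1}, x_t) · f_{t+1}(x_t, x_{t+1}) / ξ_{t+1}(x_{t+1}) λ(dx_{t−1}) λ(dx_t) λ(dx_{t+1}), as an equality in [0,∞]. (The left-hand side is p(y_{1:T}) · E[φ(X_t) | y_{1:T}] whenever 0 < p(y_{1:T}) < ∞.) -/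
open MeasureTheory ENNReal

/-! Split a path `x_{1:T}` into `x_{1:t-2}`, `x_{t-1}`, `x_t`, `x_{t+1}` and `x_{t+2:T}`. The
path density is a product of one-step factors, so it factorises along the split
(`segDens_append`). Integrating out `x_{t+2:T}` gives the backward integral, which equals
`γ̃_{t+1} / (ξ_{t+1} g_{t+1})`, and integrating out `x_{1:t-2}` with `x_{t-1}` held fixed gives
`γ_{t-1}(x_{t-1})`. Tonelli's theorem justifies every exchange of integrals. -/

section PiFin

variable {α : Type*} [MeasurableSpace α] (μ : Measure α) [SigmaFinite μ]

theorem lintegral_pi_fin_append {k m : ℕ} {F : (Fin (k + m) → α) → ℝ≥0∞} (hF : Measurable F) :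
    ∫⁻ x, F x ∂Measure.pi (fun _ => μ) =
      ∫⁻ u, ∫⁻ v, F (Fin.append u v) ∂Measure.pi (fun _ => μ) ∂Measure.pi (fun _ => μ) := by
  have e := (measurePreserving_piCongrLeft (fun _ : Fin (k + m) => μ) finSumFinEquiv).comp
    (measurePreserving_sumPiEquivProdPi_symm (X := fun _ : Fin k ⊕ Fin m => α) fun _ => μ)
  rw [← e.lintegral_comp hF]
  refine (lintegral_prod _ (hF.comp e.measurable).aemeasurable).trans ?_
  refine lintegral_congr fun u => lintegral_congr fun v => congrArg F ?_
  refine funext (Fin.addCases (fun i => ?_) fun i => ?_)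
  · rw [Fin.append_left]; exact Equiv.piCongrLeft_sumInl (fun _ => α) finSumFinEquiv u v i
  · rw [Fin.append_right]; exact Equiv.piCongrLeft_sumInr (fun _ => α) finSumFinEquiv u v i

theorem lintegral_pi_fin_snoc {k : ℕ} {F : (Fin (k + 1) → α) → ℝ≥0∞} (hF : Measurable F) :
    ∫⁻ x, F x ∂Measure.pi (fun _ => μ) =
      ∫⁻ u, ∫⁻ y, F (Fin.snoc u y) ∂μ ∂Measure.pi (fun _ => μ) := by
  have e := (measurePreserving_piFinSuccAbove (fun _ : Fin (k + 1) => μ) (Fin.last k)).symm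
  rw [← e.lintegral_comp hF]
  refine (lintegral_prod_symm _ (hF.comp e.measurable).aemeasurable).trans ?_
  simp [Fin.snocEquiv]

end PiFin

section Paths

variable {E : Type*} {f : ℕ → E → E → ℝ≥0∞} {g : ℕ → E → ℝ≥0∞}

/-- The last point `x_k` of a path `x_{1:k}`; the empty path ends at the initial point `x0`. -/
def pathLast (x0 : E) {k : ℕ} (u : Fin k → E) : E :=
  if h : k = 0 then x0 else u ⟨k - 1, by omega⟩

theorem pathLast_succ (x0 : E) {k : ℕ} (u : Fin (k + 1) → E) :
    pathLast x0 u = u (Fin.last k) :=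
  dif_neg k.succ_ne_zero

/-- The density of the segment `x_{s+1:s+m}` started from `x_s = x`: this is
`hmmBwdDens f g T n` with `n = s`, but with the length `m` free instead of `T - n`. -/
noncomputable def segDens (f : ℕ → E → E → ℝ≥0∞) (g : ℕ → E → ℝ≥0∞) (s m : ℕ) (x : E)
    (v : Fin m → E) : ℝ≥0∞ :=
  ∏ i : Fin m,
    g (s + 1 + (i : ℕ)) (v i) *
      f (s + 1 + (i : ℕ))
        (if _h : (i : ℕ) = 0 then x
          else v ⟨(i : ℕ) - 1, Nat.lt_of_le_of_lt (Nat.sub_le _ _) i.isLt⟩)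
        (v i)

theorem segDens_append (s : ℕ) (x : E) {k m : ℕ} (u : Fin k → E) (v : Fin m → E) :
    segDens f g s (k + m) x (Fin.append u v) =
      segDens f g s k x u * segDens f g (s + k) m (pathLast x u) v := by
  simp only [segDens, Fin.prod_univ_add, Fin.append_left, Fin.append_right, Fin.val_castAdd,
    Fin.val_natAdd]
  congr 1
  · refine Finset.prod_congr rfl fun i _ => ?_
    split_ifs with hi
    · rfl
    · congr 2
      exact Fin.append_left u v ⟨i - 1, by omega⟩
  · refine Finset.prod_congr rfl fun i _ => ?_
    rw [show s + 1 + (k + i) = s + k + 1 + i by omega]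
    congr 2
    rcases Nat.eq_zero_or_pos (i : ℕ) with hi | hi
    · rcases Nat.eq_zero_or_pos k with hk | hk
      · subst hk; simp [hi, pathLast]
      · rw [dif_neg (by omega), dif_pos hi, pathLast, dif_neg (by omega),
          show (⟨k + i - 1, _⟩ : Fin (k + m)) = Fin.castAdd m ⟨k - 1, by omega⟩ from
            Fin.ext (by simp [hi]), Fin.append_left]
    · rw [dif_neg (by omega), dif_neg (by omega),
        show (⟨k + i - 1, _⟩ : Fin (k + m)) = Fin.natAdd k ⟨i - 1, by omega⟩ from
          Fin.ext (by simp; omega), Fin.append_right]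

theorem segDens_one (s : ℕ) (x : E) (v : Fin 1 → E) :
    segDens f g s 1 x v = g (s + 1) (v 0) * f (s + 1) x (v 0) := by
  simp [segDens]

end Paths

section HMM

variable {E : Type*} [MeasurableSpace E] {f : ℕ → E → E → ℝ≥0∞} {g : ℕ → E → ℝ≥0∞}

theorem hmmDens_eq_segDens (x0 : E) (k : ℕ) : hmmDens f g x0 k = segDens f g 0 k x0 := by
  funext u
  simp only [hmmDens, segDens, Nat.zero_add, Nat.add_comm 1]

theorem hmmDens_append (x0 : E) {k m : ℕ} (u : Fin k → E) (v : Fin m → E) :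
    hmmDens f g x0 (k + m) (Fin.append u v) =
      hmmDens f g x0 k u * segDens f g k m (pathLast x0 u) v := by
  rw [hmmDens_eq_segDens, hmmDens_eq_segDens, segDens_append, Nat.zero_add]

theorem hmmDens_snoc (x0 : E) {k : ℕ} (u : Fin k → E) (y : E) :
    hmmDens f g x0 (k + 1) (Fin.snoc u y) =
      hmmDens f g x0 k u * (g (k + 1) y * f (k + 1) (pathLast x0 u) y) := by
  rw [Fin.snoc_eq_append, hmmDens_append, segDens_one, Fin.cons_zero]

theorem measurable_pathLast (x0 : E) (k : ℕ) : Measurable (pathLast (k := k) x0) := by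
  unfold pathLast
  split_ifs <;> fun_prop

theorem measurable_segDens (hf : ∀ n, Measurable (fun p : E × E => f n p.1 p.2))
    (hg : ∀ n, Measurable (g n)) (s m : ℕ) :
    Measurable (fun p : E × (Fin m → E) => segDens f g s m p.1 p.2) := by
  refine Finset.measurable_prod _ fun i _ => Measurable.mul ?_ ?_
  · fun_prop
  · split_ifs
    · exact (hf _).comp (by fun_prop : Measurable fun p : E × (Fin m → E) => (p.1, p.2 i))
    · exact (hf _).comp (by fun_prop : Measurable fun p : E × (Fin m → E) => (p.2 _, p.2 i))

theorem measurable_hmmDens (hf : ∀ n, Measurable (fun p : E × E => f n p.1 p.2))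
    (hg : ∀ n, Measurable (g n)) (x0 : E) (k : ℕ) : Measurable (hmmDens f g x0 k) := by
  rw [hmmDens_eq_segDens]
  exact (measurable_segDens hf hg 0 k).comp (by fun_prop : Measurable fun u : Fin k → E => (x0, u))

theorem gammaFwd_succ (lam : Measure E) (x0 : E) (k : ℕ) (x : E) :
    gammaFwd lam f g x0 (k + 1) x =
      ∫⁻ u, hmmDens f g x0 k u * (g (k + 1) x * f (k + 1) (pathLast x0 u) x)
        ∂Measure.pi fun _ => lam :=
  rfl

theorem gammaBwd_add (lam : Measure E) (ξ : ℕ → E → ℝ≥0∞) (n m : ℕ) (x : E) :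
    gammaBwd lam f g ξ (n + m) n x =
      ξ n x * g n x * ∫⁻ v, segDens f g n m x v ∂Measure.pi fun _ => lam := by
  have key : ∀ m' (_ : m' = m), ∫⁻ v, segDens f g n m' x v ∂(Measure.pi fun _ => lam) =
      ∫⁻ v, segDens f g n m x v ∂Measure.pi fun _ => lam := by
    rintro _ rfl
    rfl
  exact congrArg _ (key _ (Nat.add_sub_cancel_left ..))

end HMM

section Integrals

variable {E : Type*} [MeasurableSpace E] (lam : Measure E) [SigmaFinite lam]
  {f : ℕ → E → E → ℝ≥0∞} {g : ℕ → E → ℝ≥0∞}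

theorem lintegral_mul_hmmDens_append (hf : ∀ n, Measurable (fun p : E × E => f n p.1 p.2))
    (hg : ∀ n, Measurable (g n)) (x0 : E) {k m : ℕ} {G : (Fin k → E) → ℝ≥0∞}
    (hG : Measurable G) :
    ∫⁻ x : Fin (k + m) → E, G (fun i => x (Fin.castAdd m i)) * hmmDens f g x0 (k + m) x
        ∂(Measure.pi fun _ => lam) =
      ∫⁻ u, G u * hmmDens f g x0 k u *
        ∫⁻ v, segDens f g k m (pathLast x0 u) v ∂(Measure.pi fun _ => lam)
        ∂Measure.pi fun _ => lam := by
  rw [lintegral_pi_fin_append lam ?_]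
  · refine lintegral_congr fun u => ?_
    simp only [Fin.append_left, hmmDens_append, ← mul_assoc]
    exact lintegral_const_mul _ <|
      (measurable_segDens hf hg k m).comp (by fun_prop : Measurable fun v => (pathLast x0 u, v))
  · exact (hG.comp (by fun_prop)).mul (measurable_hmmDens hf hg x0 _)

theorem lintegral_hmmDens_succ_mul (hf : ∀ n, Measurable (fun p : E × E => f n p.1 p.2))
    (hg : ∀ n, Measurable (g n)) (x0 : E) (k : ℕ) {H : E → E → ℝ≥0∞}
    (hH : Measurable (Function.uncurry H)) :
    ∫⁻ w : Fin (k + 1) → E, hmmDens f g x0 (k + 1) w * H (pathLast x0 (Fin.init w)) (w (Fin.last k))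
        ∂(Measure.pi fun _ => lam) =
      ∫⁻ u, hmmDens f g x0 k u *
        ∫⁻ y, g (k + 1) y * f (k + 1) (pathLast x0 u) y * H (pathLast x0 u) y ∂lam
        ∂Measure.pi fun _ => lam := by
  have hinit : Measurable (Fin.init : (Fin (k + 1) → E) → Fin k → E) :=
    measurable_pi_lambda _ fun i => measurable_pi_apply _
  rw [lintegral_pi_fin_snoc lam ?_]
  · refine lintegral_congr fun u => ?_
    simp only [hmmDens_snoc, Fin.init_snoc, Fin.snoc_last, mul_assoc (hmmDens f g x0 k u)]
    have hpair : Measurable fun y : E => (pathLast x0 u, y) := by fun_prop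
    exact lintegral_const_mul _ (((hg _).mul ((hf _).comp hpair)).mul (hH.comp hpair))
  · exact (measurable_hmmDens hf hg x0 _).mul
      (hH.comp (((measurable_pathLast x0 k).comp hinit).prodMk (measurable_pi_apply _)))

theorem lintegral_hmmDens_mul_last (hf : ∀ n, Measurable (fun p : E × E => f n p.1 p.2))
    (hg : ∀ n, Measurable (g n)) (x0 : E) (k : ℕ) {C : E → ℝ≥0∞} (hC : Measurable C) :
    ∫⁻ w : Fin (k + 1) → E, hmmDens f g x0 (k + 1) w * C (w (Fin.last k))
        ∂(Measure.pi fun _ => lam) =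
      ∫⁻ x, gammaFwd lam f g x0 (k + 1) x * C x ∂lam := by
  have htrans : Measurable fun p : (Fin k → E) × E =>
      g (k + 1) p.2 * f (k + 1) (pathLast x0 p.1) p.2 :=
    ((hg _).comp measurable_snd).mul
      ((hf _).comp (((measurable_pathLast x0 k).comp measurable_fst).prodMk measurable_snd))
  rw [lintegral_pi_fin_snoc lam ?_]
  · simp only [hmmDens_snoc, Fin.snoc_last]
    rw [lintegral_lintegral_swap ((((measurable_hmmDens hf hg x0 k).comp measurable_fst).mul
      htrans).mul (hC.comp measurable_snd)).aemeasurable]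
    refine lintegral_congr fun x => ?_
    rw [gammaFwd_succ]
    exact lintegral_mul_const _ <|
      (measurable_hmmDens hf hg x0 k).mul (htrans.comp (by fun_prop : Measurable fun u => (u, x)))
  · exact (measurable_hmmDens hf hg x0 _).mul (hC.comp (measurable_pi_apply _))

theorem lintegral_hmmDens_mul_last_two (hf : ∀ n, Measurable (fun p : E × E => f n p.1 p.2))
    (hg : ∀ n, Measurable (g n)) (x0 : E) (k : ℕ) {H : E → E → ℝ≥0∞}
    (hH : Measurable (Function.uncurry H)) :
    ∫⁻ u : Fin (k + 3) → E, hmmDens f g x0 (k + 3) u * H (u ⟨k + 1, by omega⟩) (u (Fin.last _))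
        ∂(Measure.pi fun _ => lam) =
      ∫⁻ x, ∫⁻ y, ∫⁻ z, gammaFwd lam f g x0 (k + 1) x *
        (g (k + 2) y * f (k + 2) x y * (g (k + 3) z * f (k + 3) y z * H y z)) ∂lam ∂lam ∂lam := by
  set D : E → E → ℝ≥0∞ := fun y z => g (k + 3) z * f (k + 3) y z * H y z
  have hD : Measurable (Function.uncurry D) :=
    (((hg _).comp measurable_snd).mul (hf _)).mul hH
  have hDint : Measurable fun y => ∫⁻ z, D y z ∂lam := hD.lintegral_prod_right'
  set A : E → E → ℝ≥0∞ := fun x y => g (k + 2) y * f (k + 2) x y * ∫⁻ z, D y z ∂lam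
  have hA : Measurable (Function.uncurry A) :=
    (((hg _).comp measurable_snd).mul (hf _)).mul (hDint.comp measurable_snd)
  calc _ = ∫⁻ u : Fin (k + 3) → E, hmmDens f g x0 (k + 3) u *
          H (pathLast x0 (Fin.init u)) (u (Fin.last _)) ∂(Measure.pi fun _ => lam) := by
        simp only [pathLast_succ]
        rfl
    _ = ∫⁻ u : Fin (k + 2) → E, hmmDens f g x0 (k + 2) u *
          ∫⁻ z, D (u (Fin.last _)) z ∂lam ∂(Measure.pi fun _ => lam) := by
        rw [lintegral_hmmDens_succ_mul lam hf hg x0 _ hH]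
        simp only [pathLast_succ]
        rfl
    _ = ∫⁻ w : Fin (k + 1) → E, hmmDens f g x0 (k + 1) w *
          ∫⁻ y, A (w (Fin.last _)) y ∂lam ∂(Measure.pi fun _ => lam) := by
        rw [lintegral_hmmDens_succ_mul lam hf hg x0 _ (H := fun _ y => ∫⁻ z, D y z ∂lam)
          (hDint.comp measurable_snd)]
        simp only [pathLast_succ]
        rfl
    _ = ∫⁻ x, gammaFwd lam f g x0 (k + 1) x * ∫⁻ y, A x y ∂lam ∂lam :=
        lintegral_hmmDens_mul_last lam hf hg x0 _ hA.lintegral_prod_right'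
    _ = _ := by
        refine lintegral_congr fun x => ?_
        rw [← lintegral_const_mul _ hA.of_uncurry_left]
        refine lintegral_congr fun y => ?_
        rw [← mul_assoc, ← lintegral_const_mul _ hD.of_uncurry_left]
        refine lintegral_congr fun z => ?_
        simp only [D, mul_assoc]

end Integrals

/-- **Two-filter representation of a smoothing functional**: for `2 ≤ t ≤ T - 1` and every
measurable `φ : E → [0,∞]`,
`∫ φ(x_t) ∏_{n=1}^T g_n(x_n) f_n(x_{n-1},x_n) λ^{⊗T}(dx_{1:T})
  = ∫∫∫ γ_{t-1}(x_{t-1}) γ̃_{t+1}(x_{t+1}) φ(x_t) g_t(x_t) f_t(x_{t-1},x_t)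
     f_{t+1}(x_t,x_{t+1}) / ξ_{t+1}(x_{t+1}) λ(dx_{t-1}) λ(dx_t) λ(dx_{t+1})`. -/
theorem two_filter_smoothing_functional
    {E : Type*} [MeasurableSpace E] (lam : Measure E) [SigmaFinite lam]
    (T : ℕ) (x0 : E)
    (f : ℕ → E → E → ℝ≥0∞) (g : ℕ → E → ℝ≥0∞) (ξ : ℕ → E → ℝ≥0∞)
    (hf : ∀ n, Measurable (fun p : E × E => f n p.1 p.2))
    (hg : ∀ n, Measurable (g n))
    (hξpos : ∀ n x, 0 < ξ n x) (hξfin : ∀ n x, ξ n x ≠ ∞)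
    (t : ℕ) (ht : 2 ≤ t) (ht' : t ≤ T - 1)
    (φ : E → ℝ≥0∞) (hφ : Measurable φ) :
    (∫⁻ x : Fin T → E, φ (x ⟨t - 1, by omega⟩) * hmmDens f g x0 T x
        ∂(Measure.pi fun _ => lam)) =
      ∫⁻ xtm1, ∫⁻ xt, ∫⁻ xtp1,
        gammaFwd lam f g x0 (t - 1) xtm1 * gammaBwd lam f g ξ T (t + 1) xtp1 *
          φ xt * g t xt * f t xtm1 xt * f (t + 1) xt xtp1 / ξ (t + 1) xtp1 ∂lam ∂lam ∂lam := by
  obtain ⟨a, rfl⟩ : ∃ a, t = a + 2 := ⟨t - 2, by omega⟩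
  obtain ⟨b, rfl⟩ : ∃ b, T = a + 3 + b := ⟨T - (a + 3), by omega⟩
  simp only [show a + 2 - 1 = a + 1 from rfl]
  set B : E → ℝ≥0∞ := fun z => ∫⁻ v, segDens f g (a + 3) b z v ∂(Measure.pi fun _ => lam)
  have hB : Measurable B := (measurable_segDens hf hg _ _).lintegral_prod_right'
  have hφ' : Measurable fun u : Fin (a + 3) → E => φ (u ⟨a + 1, by omega⟩) := by fun_prop
  calc _ = ∫⁻ u : Fin (a + 3) → E, hmmDens f g x0 (a + 3) u *
          (φ (u ⟨a + 1, by omega⟩) * B (u (Fin.last _))) ∂(Measure.pi fun _ => lam) := by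
        refine (lintegral_mul_hmmDens_append lam hf hg x0 hφ').trans (lintegral_congr fun u => ?_)
        rw [pathLast_succ]
        ring
    _ = _ := lintegral_hmmDens_mul_last_two lam hf hg x0 a (H := fun y z => φ y * B z)
          ((hφ.comp measurable_fst).mul (hB.comp measurable_snd))
    _ = _ := by
        refine lintegral_congr fun x => lintegral_congr fun y => lintegral_congr fun z => ?_
        rw [gammaBwd_add, ENNReal.eq_div_iff (hξpos _ _).ne' (hξfin _ _)]
        ring
end

section
/- Feynman–Kac normalizing constant product formula: if γ_p(1) > 0 for every 1 ≤ p ≤ n − 1, then γ_n(1) = ∏_{p=1}^{n−1} η_p(W_p), where η_p(φ) := γ_p(φ) / γ_p(1). (This is the identity showing that the product of the average incremental weights of a sequential Monte Carlo algorithm targets the normalizing constant.) -/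
open MeasureTheory ProbabilityTheory

/-- The unnormalized Feynman–Kac marginal: `gammaFK ν κ W m φ` is
`γ_{m+1}(φ) = ∫ φ(x_{m+1}) ∏_{q=1}^{m} W_q(x_q) ν(dx_1) κ_2(x_1,dx_2) ⋯ κ_{m+1}(x_m,dx_{m+1})`,
so that `γ_p(φ) = gammaFK ν κ W (p - 1) φ` for `p ≥ 1` (and `γ_1 = ν`). -/
noncomputable def gammaFK {E : Type*} [MeasurableSpace E] (ν : Measure E)
    (κ : ℕ → Kernel E E) (W : ℕ → E → ℝ) : ℕ → (E → ℝ) → ℝ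
  | 0, φ => ∫ x, φ x ∂ν
  | m + 1, φ => gammaFK ν κ W m (fun x => W (m + 1) x * ∫ y, φ y ∂(κ (m + 2) x))

lemma gammaFK_succ_one {E : Type*} [MeasurableSpace E] (ν : Measure E)
    (κ : ℕ → Kernel E E) (hκ : ∀ p, IsMarkovKernel (κ p)) (W : ℕ → E → ℝ) (m : ℕ) :
    gammaFK ν κ W (m + 1) (fun _ => 1) = gammaFK ν κ W m (W (m + 1)) := by
  haveI := hκ (m + 2)
  show gammaFK ν κ W m (fun x => W (m + 1) x * ∫ _, (1 : ℝ) ∂(κ (m + 2) x)) = _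
  congr 1
  funext x
  simp [measure_univ]

lemma gammaFK_prod {E : Type*} [MeasurableSpace E] (ν : Measure E)
    [IsProbabilityMeasure ν]
    (κ : ℕ → Kernel E E) (hκ : ∀ p, IsMarkovKernel (κ p)) (W : ℕ → E → ℝ) (m : ℕ)
    (hpos : ∀ k, k < m → 0 < gammaFK ν κ W k (fun _ => 1)) :
    gammaFK ν κ W m (fun _ => 1) =
      ∏ p ∈ Finset.Icc 1 m,
        gammaFK ν κ W (p - 1) (W p) / gammaFK ν κ W (p - 1) (fun _ => 1) := by
  induction m with
  | zero => simp [gammaFK]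
  | succ m ih =>
    have hIcc : Finset.Icc 1 (m + 1) = insert (m + 1) (Finset.Icc 1 m) := by
      ext x; simp [Finset.mem_Icc]; omega
    rw [hIcc, Finset.prod_insert (by simp)]
    have hm : 0 < gammaFK ν κ W m (fun _ => 1) := hpos m (Nat.lt_succ_self m)
    rw [← ih (fun k hk => hpos k (by omega))]
    simp only [Nat.add_sub_cancel]
    rw [div_mul_cancel₀ _ (ne_of_gt hm)]
    exact gammaFK_succ_one ν κ hκ W m

/-- **Feynman–Kac normalizing constant product formula**: if `γ_p(1) > 0` for every
`1 ≤ p ≤ n - 1`, then `γ_n(1) = ∏_{p=1}^{n-1} η_p(W_p)` where `η_p(φ) = γ_p(φ)/γ_p(1)`. -/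
theorem feynman_kac_normalizing_constant_product
    {E : Type*} [MeasurableSpace E] (n : ℕ) (hn : 1 ≤ n)
    (ν : Measure E) [IsProbabilityMeasure ν]
    (κ : ℕ → Kernel E E) (hκ : ∀ p, IsMarkovKernel (κ p))
    (W : ℕ → E → ℝ) (hWmeas : ∀ q, Measurable (W q))
    (hWnonneg : ∀ q x, 0 ≤ W q x) (hWbdd : ∀ q, ∃ M : ℝ, ∀ x, W q x ≤ M)
    (hpos : ∀ p, 1 ≤ p → p ≤ n - 1 → 0 < gammaFK ν κ W (p - 1) (fun _ => 1)) :
    gammaFK ν κ W (n - 1) (fun _ => 1) =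
      ∏ p ∈ Finset.Icc 1 (n - 1),
        gammaFK ν κ W (p - 1) (W p) / gammaFK ν κ W (p - 1) (fun _ => 1) := by
  refine gammaFK_prod ν κ hκ W (n - 1) (fun k hk => ?_)
  have := hpos (k + 1) (by omega) (by omega)
  simpa using this
end

section
/- Del Moral's telescoping decomposition of the normalizing constant error: let μ_1, …, μ_n be probability measures on E with ∫_E W_q dμ_q > 0 for every 1 ≤ q ≤ n − 1, and set c_1 := 1 and c_q := ∏_{p=1}^{q−1} ∫_E W_p dμ_p for 2 ≤ q ≤ n. For q = 1 define Φ_1(μ_0)(ψ) := ∫_E ψ dν, and for 2 ≤ q ≤ n and a probability measure μ with ∫ W_{q−1} dμ > 0 define Φ_q(μ)(ψ) := (∫_E W_{q−1}(x) [∫_E ψ(y) κ_q(x, dy)] μ(dx)) / (∫_E W_{q−1} dμ). Define the Feynman–Kac semigroup Q_{q,n}(φ)(x) := ∫ φ(x_n) ∏_{s=q}^{n−1} W_s(x_s) κ_{q+1}(x_q, dx_{q+1}) ⋯ κ_n(x_{n−1}, dx_n), evaluated at x_q = x, with Q_{n,n}(φ) := φ. Then for every bounded measurable φ : E → ℝ,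 c_n ∫_E φ dμ_n − γ_n(φ) = Σ_{q=1}^n c_q [ ∫_E Q_{q,n}(φ) dμ_q − Φ_q(μ_{q−1})(Q_{q,n}(φ)) ]. -/
/-!
Write `c_q = ∏_{p<q} μ_p(W_p)` and `F_q = c_q μ_q(Q_{q,n} φ)`, with `F_0 = γ_n(φ)`.
Since `Q_{q-1,n} φ = W_{q-1} κ_q(Q_{q,n} φ)`, we get
`Φ_q(μ_{q-1})(Q_{q,n} φ) = μ_{q-1}(Q_{q-1,n} φ) / μ_{q-1}(W_{q-1})`, and
`c_q = c_{q-1} μ_{q-1}(W_{q-1})`, so the `q`-th summand is `F_q - F_{q-1}`; likewise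
`γ_n(φ) = ν(Q_{1,n} φ)` makes the first summand `F_1 - F_0`. The sum telescopes to `F_n - F_0`.
-/

open MeasureTheory ProbabilityTheory

/-- The Feynman–Kac semigroup: `QFK κ W q k φ` is `Q_{q,q+k}(φ)`, i.e.
`Q_{q,n}(φ)(x) = ∫ φ(x_n) ∏_{s=q}^{n-1} W_s(x_s) κ_{q+1}(x_q,dx_{q+1}) ⋯ κ_n(x_{n-1},dx_n)`
evaluated at `x_q = x` (with `Q_{n,n}(φ) = φ`), so `Q_{q,n} = QFK κ W q (n - q)`. -/
noncomputable def QFK {E : Type*} [MeasurableSpace E]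
    (κ : ℕ → Kernel E E) (W : ℕ → E → ℝ) (q : ℕ) : ℕ → (E → ℝ) → E → ℝ
  | 0, φ => φ
  | k + 1, φ => QFK κ W q k (fun x => W (q + k) x * ∫ y, φ y ∂(κ (q + k + 1) x))

/-- The selection–mutation operator: `Φ_1(μ)(ψ) = ν(ψ)` and, for `q ≥ 2`,
`Φ_q(μ)(ψ) = μ(W_{q-1} κ_q(ψ)) / μ(W_{q-1})`. -/
noncomputable def PhiFK {E : Type*} [MeasurableSpace E] (ν : Measure E)
    (κ : ℕ → Kernel E E) (W : ℕ → E → ℝ) (q : ℕ) (μ : Measure E) (ψ : E → ℝ) : ℝ :=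
  if q ≤ 1 then ∫ x, ψ x ∂ν
  else (∫ x, W (q - 1) x * ∫ y, ψ y ∂(κ q x) ∂μ) / ∫ x, W (q - 1) x ∂μ

open Finset

theorem sum_Ioc_sub_pred {M : Type*} [AddCommGroup M] (f : ℕ → M) {m n : ℕ} (hmn : m ≤ n) :
    ∑ q ∈ Ioc m n, (f q - f (q - 1)) = f n - f m := by
  rw [← Ico_add_one_add_one_eq_Ioc, ← sum_Ico_add' (fun q => f q - f (q - 1)) m n 1]
  simpa only [Nat.add_sub_cancel] using sum_Ico_sub f hmn

section FeynmanKac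

variable {E : Type*} [MeasurableSpace E] (ν : Measure E) (κ : ℕ → Kernel E E) (W : ℕ → E → ℝ)

theorem QFK_succ (k q : ℕ) (φ : E → ℝ) :
    QFK κ W q (k + 1) φ = fun x => W q x * ∫ y, QFK κ W (q + 1) k φ y ∂(κ (q + 1) x) := by
  induction k generalizing φ with
  | zero => rfl
  | succ k ih =>
    show QFK κ W q (k + 1) (fun x => W (q + (k + 1)) x * ∫ y, φ y ∂(κ (q + (k + 1) + 1) x)) = _
    rw [ih, show q + (k + 1) = q + 1 + k by omega]
    rfl

theorem gammaFK_eq_integral_QFK (m : ℕ) (φ : E → ℝ) :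
    gammaFK ν κ W m φ = ∫ x, QFK κ W 1 m φ x ∂ν := by
  induction m generalizing φ with
  | zero => rfl
  | succ m ih =>
    show gammaFK ν κ W m (fun x => W (m + 1) x * ∫ y, φ y ∂(κ (m + 2) x)) = _
    rw [ih]
    show _ = ∫ x, QFK κ W 1 m (fun x => W (1 + m) x * ∫ y, φ y ∂(κ (1 + m + 1) x)) x ∂ν
    rw [Nat.add_comm 1 m]

theorem PhiFK_one (μ : Measure E) (ψ : E → ℝ) : PhiFK ν κ W 1 μ ψ = ∫ x, ψ x ∂ν :=
  if_pos le_rfl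

theorem PhiFK_succ_QFK {q : ℕ} (hq : 1 ≤ q) (μ : Measure E) (k : ℕ) (φ : E → ℝ) :
    PhiFK ν κ W (q + 1) μ (QFK κ W (q + 1) k φ) =
      (∫ x, QFK κ W q (k + 1) φ x ∂μ) / ∫ x, W q x ∂μ := by
  rw [PhiFK, if_neg (by omega), QFK_succ, Nat.add_sub_cancel]

theorem prod_mul_sub_PhiFK_QFK (μ : ℕ → Measure E) (φ : E → ℝ) {q n : ℕ} (hq : 2 ≤ q)
    (hqn : q ≤ n) (hW : ∫ x, W (q - 1) x ∂(μ (q - 1)) ≠ 0) :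
    (∏ p ∈ Icc 1 (q - 1), ∫ x, W p x ∂(μ p)) *
        ((∫ x, QFK κ W q (n - q) φ x ∂(μ q)) - PhiFK ν κ W q (μ (q - 1)) (QFK κ W q (n - q) φ)) =
      (∏ p ∈ Icc 1 (q - 1), ∫ x, W p x ∂(μ p)) * (∫ x, QFK κ W q (n - q) φ x ∂(μ q)) -
        (∏ p ∈ Icc 1 (q - 1 - 1), ∫ x, W p x ∂(μ p)) *
          ∫ x, QFK κ W (q - 1) (n - (q - 1)) φ x ∂(μ (q - 1)) := by
  obtain ⟨p, rfl⟩ : ∃ p, q = p + 1 + 1 := ⟨q - 2, by omega⟩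
  obtain ⟨k, rfl⟩ : ∃ k, n = p + 1 + 1 + k := ⟨n - (p + 2), by omega⟩
  have hnp : p + 1 + 1 + k - (p + 1) = k + 1 := by omega
  simp only [Nat.add_sub_cancel, Nat.add_sub_cancel_left, hnp] at hW ⊢
  rw [PhiFK_succ_QFK ν κ W (by omega), prod_Icc_succ_top (by omega)]
  field_simp

end FeynmanKac

theorem del_moral_telescoping_decomposition_general
    {E : Type*} [MeasurableSpace E] (n : ℕ) (hn : 1 ≤ n)
    (ν : Measure E)
    (κ : ℕ → Kernel E E)
    (W : ℕ → E → ℝ)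
    (μ : ℕ → Measure E)
    (hpos : ∀ q, 1 ≤ q → q ≤ n - 1 → 0 < ∫ x, W q x ∂(μ q))
    (φ : E → ℝ) :
    (∏ p ∈ Finset.Icc 1 (n - 1), ∫ x, W p x ∂(μ p)) * (∫ x, φ x ∂(μ n)) -
        gammaFK ν κ W (n - 1) φ =
      ∑ q ∈ Finset.Icc 1 n,
        (∏ p ∈ Finset.Icc 1 (q - 1), ∫ x, W p x ∂(μ p)) *
          ((∫ x, QFK κ W q (n - q) φ x ∂(μ q)) -
            PhiFK ν κ W q (μ (q - 1)) (QFK κ W q (n - q) φ)) := by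
  set F : ℕ → ℝ := fun q =>
    (∏ p ∈ Icc 1 (q - 1), ∫ x, W p x ∂(μ p)) * ∫ x, QFK κ W q (n - q) φ x ∂(μ q)
  have increments : ∀ q ∈ Ioc 1 n,
      (∏ p ∈ Icc 1 (q - 1), ∫ x, W p x ∂(μ p)) *
          ((∫ x, QFK κ W q (n - q) φ x ∂(μ q)) -
            PhiFK ν κ W q (μ (q - 1)) (QFK κ W q (n - q) φ)) = F q - F (q - 1) := by
    intro q hq
    rw [mem_Ioc] at hq
    exact prod_mul_sub_PhiFK_QFK ν κ W μ φ hq.1 hq.2 (hpos (q - 1) (by omega) (by omega)).ne'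
  rw [Icc_eq_cons_Ioc hn, sum_cons, sum_congr rfl increments, sum_Ioc_sub_pred F hn,
    PhiFK_one, gammaFK_eq_integral_QFK]
  simp only [F, Nat.sub_self, QFK, Icc_eq_empty_of_lt zero_lt_one, prod_empty, one_mul]
  ring

/-- **Del Moral's telescoping decomposition of the normalizing constant error**: with
`c_q = ∏_{p=1}^{q-1} μ_p(W_p)`,
`c_n μ_n(φ) - γ_n(φ) = ∑_{q=1}^n c_q [μ_q(Q_{q,n}φ) - Φ_q(μ_{q-1})(Q_{q,n}φ)]`. -/
theorem del_moral_telescoping_decomposition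
    {E : Type*} [MeasurableSpace E] (n : ℕ) (hn : 1 ≤ n)
    (ν : Measure E) [IsProbabilityMeasure ν]
    (κ : ℕ → Kernel E E) (hκ : ∀ p, IsMarkovKernel (κ p))
    (W : ℕ → E → ℝ) (hWmeas : ∀ q, Measurable (W q))
    (hWnonneg : ∀ q x, 0 ≤ W q x) (hWbdd : ∀ q, ∃ M : ℝ, ∀ x, W q x ≤ M)
    (μ : ℕ → Measure E) (hμ : ∀ q, 1 ≤ q → q ≤ n → IsProbabilityMeasure (μ q))
    (hpos : ∀ q, 1 ≤ q → q ≤ n - 1 → 0 < ∫ x, W q x ∂(μ q))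
    (φ : E → ℝ) (hφmeas : Measurable φ) (hφbdd : ∃ M : ℝ, ∀ x, |φ x| ≤ M) :
    (∏ p ∈ Finset.Icc 1 (n - 1), ∫ x, W p x ∂(μ p)) * (∫ x, φ x ∂(μ n)) -
        gammaFK ν κ W (n - 1) φ =
      ∑ q ∈ Finset.Icc 1 n,
        (∏ p ∈ Finset.Icc 1 (q - 1), ∫ x, W p x ∂(μ p)) *
          ((∫ x, QFK κ W q (n - q) φ x ∂(μ q)) -
            PhiFK ν κ W q (μ (q - 1)) (QFK κ W q (n - q) φ)) :=
  del_moral_telescoping_decomposition_general n hn ν κ W μ hpos φ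
end
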